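/- arXiv:1711.05161 — 9 statements merged into one kernel-verified Lean document; each statement's English description precedes it below -/
import Mathlib

section
/- Let u, t, v ∈ ℝ² with det[u t] > 0 and det[t v] > 0. Then every nonzero triple (α₁, α₂, β) ∈ ℝ³ satisfying α₁·v + α₂·u + β·t = 0 has α₁·α₂ > 0. -/
/-- The determinant of the 2×2 matrix with columns `a` and `b`. -/
def det2 (a b : ℝ × ℝ) : ℝ := a.1 * b.2 - a.2 * b.1

/-- If `det[u t] > 0` and `det[t v] > 0`, then every nonzero triple `(α₁, α₂, β)`
with `α₁·v + α₂·u + β·t = 0` satisfies `α₁·α₂ > 0`. -/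
theorem stmt1 (u t v : ℝ × ℝ) (hut : 0 < det2 u t) (htv : 0 < det2 t v)
    (α₁ α₂ β : ℝ) (hne : (α₁, α₂, β) ≠ (0, 0, 0))
    (h : α₁ • v + α₂ • u + β • t = 0) :
    0 < α₁ * α₂ := by
  unfold det2 at hut htv
  have h1 : α₁ * v.1 + α₂ * u.1 + β * t.1 = 0 := congrArg Prod.fst h
  have h2 : α₁ * v.2 + α₂ * u.2 + β * t.2 = 0 := congrArg Prod.snd h
  have key : α₂ * (u.1 * t.2 - u.2 * t.1) = α₁ * (t.1 * v.2 - t.2 * v.1) := by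
    linear_combination t.2 * h1 - t.1 * h2
  have hα₁ : α₁ ≠ 0 := by
    intro h0
    have hα₂ : α₂ = 0 := by
      rw [h0, zero_mul] at key
      exact (mul_eq_zero.1 key).resolve_right (by linarith)
    rw [h0, hα₂] at h1 h2
    simp only [zero_mul, zero_add] at h1 h2
    have hβ : β = 0 := by
      by_contra hβ0
      have ht1 : t.1 = 0 := (mul_eq_zero.1 h1).resolve_left hβ0
      have ht2 : t.2 = 0 := (mul_eq_zero.1 h2).resolve_left hβ0
      rw [ht1, ht2] at hut
      linarith
    exact hne (by rw [h0, hα₂, hβ])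
  have hsq : 0 < α₁ ^ 2 := by positivity
  have keymul : α₁ * α₂ * (u.1 * t.2 - u.2 * t.1) = α₁ ^ 2 * (t.1 * v.2 - t.2 * v.1) := by
    linear_combination α₁ * key
  nlinarith [mul_pos hsq htv, keymul, hut]
end

section
/- Let u, t, v ∈ ℝ² be such that u, t are linearly independent and t, v are linearly independent, and let a₁, b₁, a₂, b₂ ∈ ℝ with b₁ = a₂. Then there exists a vector w ∈ ℝ² with ⟨u, w⟩ = a₁, ⟨t, w⟩ = b₁ and ⟨v, w⟩ = b₂ if and only if det[u t]·b₂ + det[t v]·a₁ + det[v u]·b₁ = 0. -/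
/-- The Euclidean inner product on `ℝ²`. -/
def dot2 (a b : ℝ × ℝ) : ℝ := a.1 * b.1 + a.2 * b.2

lemma det2_ne_zero_of_linearIndependent {x y : ℝ × ℝ} (h : LinearIndependent ℝ ![x, y]) :
    det2 x y ≠ 0 := by
  intro hdet
  rw [det2] at hdet
  have hx : x ≠ 0 := h.ne_zero 0
  have h₁ := LinearIndependent.pair_iff.1 h y.2 (-x.2) <| by
    simp only [Prod.ext_iff, Prod.fst_add, Prod.snd_add, Prod.smul_fst, Prod.smul_snd,
      smul_eq_mul, Prod.fst_zero, Prod.snd_zero]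
    exact ⟨by linear_combination hdet, by ring⟩
  have h₂ := LinearIndependent.pair_iff.1 h (-y.1) x.1 <| by
    simp only [Prod.ext_iff, Prod.fst_add, Prod.snd_add, Prod.smul_fst, Prod.smul_snd,
      smul_eq_mul, Prod.fst_zero, Prod.snd_zero]
    exact ⟨by ring, by linear_combination hdet⟩
  exact hx (Prod.ext h₂.2 (neg_eq_zero.1 h₁.2))

lemma det2_mul_dot2_cyclic_sum (u t v w : ℝ × ℝ) :
    det2 u t * dot2 v w + det2 t v * dot2 u w + det2 v u * dot2 t w = 0 := by
  simp only [det2, dot2]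
  ring

lemma exists_dot2_eq_of_det2_ne_zero {u t : ℝ × ℝ} (h : det2 u t ≠ 0) (a b : ℝ) :
    ∃ w : ℝ × ℝ, dot2 u w = a ∧ dot2 t w = b := by
  refine ⟨((a * t.2 - b * u.2) / det2 u t, (b * u.1 - a * t.1) / det2 u t), ?_, ?_⟩ <;>
  · simp only [dot2]
    field_simp
    simp only [det2]
    ring

theorem stmt2_general (u t v : ℝ × ℝ)
    (hut : LinearIndependent ℝ ![u, t])
    (a₁ b₁ b₂ : ℝ) :
    (∃ w : ℝ × ℝ, dot2 u w = a₁ ∧ dot2 t w = b₁ ∧ dot2 v w = b₂) ↔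
      det2 u t * b₂ + det2 t v * a₁ + det2 v u * b₁ = 0 := by
  constructor
  · rintro ⟨w, rfl, rfl, rfl⟩
    exact det2_mul_dot2_cyclic_sum u t v w
  · intro hglue
    have hdet := det2_ne_zero_of_linearIndependent hut
    obtain ⟨w, hu, ht⟩ := exists_dot2_eq_of_det2_ne_zero hdet a₁ b₁
    refine ⟨w, hu, ht, mul_left_cancel₀ hdet ?_⟩
    have hcyc := det2_mul_dot2_cyclic_sum u t v w
    rw [hu, ht] at hcyc
    linarith

/-- For `u, t` linearly independent and `t, v` linearly independent and `b₁ = a₂`: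
there exists `w ∈ ℝ²` with `⟨u,w⟩ = a₁`, `⟨t,w⟩ = b₁`, `⟨v,w⟩ = b₂` if and only if
`det[u t]·b₂ + det[t v]·a₁ + det[v u]·b₁ = 0`. -/
theorem stmt2 (u t v : ℝ × ℝ)
    (hut : LinearIndependent ℝ ![u, t]) (htv : LinearIndependent ℝ ![t, v])
    (a₁ b₁ a₂ b₂ : ℝ) (hb : b₁ = a₂) :
    (∃ w : ℝ × ℝ, dot2 u w = a₁ ∧ dot2 t w = b₁ ∧ dot2 v w = b₂) ↔
      det2 u t * b₂ + det2 t v * a₁ + det2 v u * b₁ = 0 :=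
  stmt2_general u t v hut a₁ b₁ b₂
end

section
/- Let u, t, v ∈ ℝ² with det[u t] > 0 and det[t v] > 0, and let a₁, b₁, a₂, b₂ ∈ ℝ with b₁ = a₂. Then the following are equivalent: (i) there exists a triple (α₁, α₂, β) ∈ ℝ³ with α₁·α₂ > 0 such that α₁·(v, b₂) + α₂·(u, a₁) + β·(t, b₁) = 0 in ℝ³ = ℝ² × ℝ; (ii) det[u t]·b₂ + det[t v]·a₁ + det[v u]·b₁ = 0. -/
/-- For `u, t, v ∈ ℝ²` with `det[u t] > 0` and `det[t v] > 0`, and `b₁ = a₂`, the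
following are equivalent: (i) there is a triple `(α₁, α₂, β)` with `α₁·α₂ > 0` and
`α₁·(v, b₂) + α₂·(u, a₁) + β·(t, b₁) = 0` in `ℝ³ = ℝ² × ℝ`;
(ii) `det[u t]·b₂ + det[t v]·a₁ + det[v u]·b₁ = 0`. -/
theorem stmt3 (u t v : ℝ × ℝ) (hut : 0 < det2 u t) (htv : 0 < det2 t v)
    (a₁ b₁ a₂ b₂ : ℝ) (hb : b₁ = a₂) :
    (∃ α₁ α₂ β : ℝ, 0 < α₁ * α₂ ∧
        α₁ • ((v, b₂) : (ℝ × ℝ) × ℝ) + α₂ • ((u, a₁) : (ℝ × ℝ) × ℝ)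
          + β • ((t, b₁) : (ℝ × ℝ) × ℝ) = 0) ↔
      det2 u t * b₂ + det2 t v * a₁ + det2 v u * b₁ = 0 := by
  constructor
  · rintro ⟨α₁, α₂, β, hpos, heq⟩
    simp only [Prod.ext_iff, Prod.smul_mk, Prod.mk_add_mk, smul_eq_mul, Prod.fst_zero,
      Prod.snd_zero, Prod.mk_eq_zero, Prod.fst_add, Prod.snd_add, Prod.smul_fst, Prod.smul_snd] at heq
    obtain ⟨⟨h1, h2⟩, h3⟩ := heq
    have hα₁ : α₁ ≠ 0 := by
      rintro rfl; simp at hpos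
    have e2 : α₂ * det2 u t - α₁ * det2 t v = 0 := by
      simp only [det2]; linear_combination t.2 * h1 - t.1 * h2
    have e3 : β * det2 u t - α₁ * det2 v u = 0 := by
      simp only [det2]; linear_combination u.1 * h2 - u.2 * h1
    have key : α₁ * (det2 u t * b₂ + det2 t v * a₁ + det2 v u * b₁) = 0 := by
      linear_combination det2 u t * h3 - a₁ * e2 - b₁ * e3
    exact (mul_eq_zero.mp key).resolve_left hα₁
  · intro h
    refine ⟨det2 u t, det2 t v, det2 v u, mul_pos hut htv, ?_⟩
    simp only [Prod.ext_iff, Prod.smul_mk, Prod.mk_add_mk, smul_eq_mul, Prod.fst_zero,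
      Prod.snd_zero, Prod.mk_eq_zero, Prod.fst_add, Prod.snd_add, Prod.smul_fst, Prod.smul_snd]
    refine ⟨⟨?_, ?_⟩, by linarith⟩ <;> · simp only [det2]; ring
end

section
/- In the two-patch setting, let α₁, α₂, β : [0,1] → ℝ be continuous with α₁(ξ)·α₂(ξ) > 0 for all ξ ∈ [0,1] and α₁(ξ)∂₂F⁽²⁾(ξ,0) + α₂(ξ)∂₁F⁽¹⁾(0,ξ) + β(ξ)∂₂F⁽¹⁾(0,ξ) = 0 for all ξ ∈ [0,1]. Let f⁽¹⁾, f⁽²⁾ : [0,1]² → ℝ be C¹ on [0,1]² with f⁽¹⁾(0,ξ) = f⁽²⁾(ξ,0) for all ξ ∈ [0,1], and let φ : F⁽¹⁾([0,1]²) ∪ F⁽²⁾([0,1]²) → ℝ be the unique function with φ ∘ F⁽ⁱ⁾ = f⁽ⁱ⁾ for i = 1, 2. Then φ is continuously differentiable on Ω if and only if α₁(ξ)∂₂f⁽²⁾(ξ,0) + α₂(ξ)∂₁f⁽¹⁾(0,ξ) + β(ξ)∂₂f⁽¹⁾(0,ξ) = 0 for all ξ ∈ [0,1]. -/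
/-- Partial derivative with respect to the first argument. -/
noncomputable def pd1 {E : Type*} [NormedAddCommGroup E] [NormedSpace ℝ E]
    (f : ℝ × ℝ → E) (x : ℝ × ℝ) : E := deriv (fun s => f (s, x.2)) x.1

/-- Partial derivative with respect to the second argument. -/
noncomputable def pd2 {E : Type*} [NormedAddCommGroup E] [NormedSpace ℝ E]
    (f : ℝ × ℝ → E) (x : ℝ × ℝ) : E := deriv (fun s => f (x.1, s)) x.2

/-- The unit square `[0,1]²` in `ℝ²`. -/
def square : Set (ℝ × ℝ) := Set.Icc (0:ℝ) 1 ×ˢ Set.Icc (0:ℝ) 1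

/-!
On the image of the `i`-th patch `φ = f⁽ⁱ⁾ ∘ (F⁽ⁱ⁾)⁻¹`, so by the inverse function theorem (and the
continuity of the inverse of `F⁽ⁱ⁾` on the compact square) `φ` has there the one-sided derivative
`Df⁽ⁱ⁾ (DF⁽ⁱ⁾)⁻¹`, continuous up to the interface. The two images are closed, so `φ` is `C¹` on `Ω`
as soon as the two one-sided derivatives coincide on the interface. They agree on the common
tangent `∂₂F⁽¹⁾ = ∂₁F⁽²⁾`; since `α₁ ≠ 0`, the geometric gluing relation expresses the transversal
vector `∂₂F⁽²⁾` through `∂₁F⁽¹⁾, ∂₂F⁽¹⁾`, so they agree on it exactly when the pullbacks satisfy the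
same relation. Conversely, if `φ` is `C¹`, applying `Dφ` to the geometric relation gives the
relation of the pullbacks at interior interface points, and at the two endpoints by continuity.
-/

open Set Filter Topology

section CompactInjective

variable {X Y Z : Type*} [TopologicalSpace X] [TopologicalSpace Y] [T2Space Y]
  [TopologicalSpace Z] {Φ : X → Y} {K : Set X} {x : X}

theorem IsCompact.eventually_mem_of_injOn (hK : IsCompact K) (hΦ : ContinuousOn Φ K)
    (hinj : InjOn Φ K) (hx : x ∈ K) {N : Set X} (hN : N ∈ 𝓝 x) :
    ∀ᶠ q in 𝓝 (Φ x), ∀ y ∈ K, Φ y = q → y ∈ N := by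
  have hfar : IsCompact (Φ '' (K \ interior N)) :=
    (hK.diff isOpen_interior).image_of_continuousOn (hΦ.mono sdiff_subset)
  have hΦx : Φ x ∉ Φ '' (K \ interior N) := by
    rintro ⟨y, ⟨hy, hyN⟩, hyx⟩
    exact hyN (hinj hy hx hyx ▸ mem_interior_iff_mem_nhds.2 hN)
  filter_upwards [hfar.isClosed.isOpen_compl.mem_nhds hΦx] with q hq y hy hyq
  by_contra hyN
  exact hq ⟨y, ⟨hy, fun h => hyN (interior_subset h)⟩, hyq⟩

theorem IsCompact.continuousWithinAt_image_inter (hK : IsCompact K) (hΦ : ContinuousOn Φ K)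
    (hinj : InjOn Φ K) (hx : x ∈ K) {g : X → Z} {h : Y → Z} {S : Set Y}
    (hg : ContinuousWithinAt g K x) (hgh : ∀ y ∈ K, Φ y ∈ S → h (Φ y) = g y)
    (hxS : Φ x ∈ S) : ContinuousWithinAt h (Φ '' K ∩ S) (Φ x) := by
  intro W hW
  rw [hgh x hx hxS] at hW
  obtain ⟨N, hN, hNW⟩ := mem_nhdsWithin_iff_exists_mem_nhds_inter.1 (hg hW)
  rw [Filter.mem_map, mem_nhdsWithin_iff_eventually]
  filter_upwards [hK.eventually_mem_of_injOn hΦ hinj hx hN]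
    with q hq ⟨⟨y, hy, hyq⟩, hyS⟩
  subst hyq
  rw [mem_preimage, hgh y hy hyS]
  exact hNW ⟨hq y hy rfl, hy⟩

end CompactInjective

theorem continuousWithinAt_of_isClosed_union {X Y : Type*} [TopologicalSpace X]
    [TopologicalSpace Y] {h : X → Y} {s t u : Set X} {p : X} (hs : IsClosed s) (ht : IsClosed t)
    (hu : u ⊆ s ∪ t) (hps : p ∈ s → ContinuousWithinAt h (s ∩ u) p)
    (hpt : p ∈ t → ContinuousWithinAt h (t ∩ u) p) : ContinuousWithinAt h u p := by
  have piece : ∀ r, IsClosed r → (p ∈ r → ContinuousWithinAt h (r ∩ u) p) →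
      ContinuousWithinAt h (r ∩ u) p := fun r hr hpr => by
    by_cases hp : p ∈ r
    · exact hpr hp
    · exact continuousWithinAt_of_notMem_closure fun hcl =>
        hp (hr.closure_eq ▸ closure_mono inter_subset_left hcl)
  refine ((piece s hs hps).union (piece t ht hpt)).mono fun q hq => ?_
  rcases hu hq with h | h
  exacts [Or.inl ⟨h, hq⟩, Or.inr ⟨h, hq⟩]

theorem map_eq_of_linear_relation {V W : Type*} [AddCommGroup V] [Module ℝ V]
    [AddCommGroup W] [Module ℝ W] (L : V →ₗ[ℝ] W) {a b c : ℝ} (ha : a ≠ 0) {u v w : V}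
    {u' v' w' : W} (h : a • u + b • v + c • w = 0) (h' : a • u' + b • v' + c • w' = 0)
    (hv : L v = v') (hw : L w = w') : L u = u' := by
  have hu : a • u = -(b • v + c • w) := by rw [eq_neg_iff_add_eq_zero, ← add_assoc, h]
  have hu' : a • u' = -(b • v' + c • w') := by rw [eq_neg_iff_add_eq_zero, ← add_assoc, h']
  refine smul_right_injective W ha ?_
  dsimp only
  rw [← map_smul, hu, map_neg, map_add, map_smul, map_smul, hv, hw, hu']

section Pushforward

variable {E F G : Type*} [NormedAddCommGroup E] [NormedSpace ℝ E]
  [NormedAddCommGroup F] [NormedSpace ℝ F] [NormedAddCommGroup G] [NormedSpace ℝ G]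

theorem UniqueDiffWithinAt.comp_fderiv_eq {s : Set E} {x : E} {Φ : E → F} {f : E → G} {φ : F → G}
    (hs : UniqueDiffWithinAt ℝ s x) (hx : x ∈ s) (hφ : DifferentiableAt ℝ φ (Φ x))
    (hΦ : DifferentiableAt ℝ Φ x) (hf : DifferentiableAt ℝ f x)
    (heq : ∀ y ∈ s, φ (Φ y) = f y) :
    (fderiv ℝ φ (Φ x)).comp (fderiv ℝ Φ x) = fderiv ℝ f x :=
  hs.eq ((hφ.hasFDerivAt.comp x hΦ.hasFDerivAt).hasFDerivWithinAt.congr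
    (fun y hy => (heq y hy).symm) (heq x hx).symm) hf.hasFDerivAt.hasFDerivWithinAt

theorem hasFDerivAt_of_isClosed_union {φ : F → G} {L : F →L[ℝ] G} {s t : Set F} {p : F}
    (hs : IsClosed s) (ht : IsClosed t) (hst : s ∪ t ∈ 𝓝 p)
    (hps : p ∈ s → HasFDerivWithinAt φ L s p) (hpt : p ∈ t → HasFDerivWithinAt φ L t p) :
    HasFDerivAt φ L p := by
  have piece : ∀ r, IsClosed r → (p ∈ r → HasFDerivWithinAt φ L r p) →
      HasFDerivWithinAt φ L r p := fun r hr hpr => by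
    by_cases hp : p ∈ r
    · exact hpr hp
    · exact .of_notMem_closure (by rwa [hr.closure_eq])
  exact ((piece s hs hps).union (piece t ht hpt)).hasFDerivAt hst

theorem hasFDerivAt_of_image_pieces {X : Type*} {Φ₁ Φ₂ : X → F} {K₁ K₂ : Set X}
    {G₁ G₂ : X → F →L[ℝ] G} {φ : F → G} (hc₁ : IsClosed (Φ₁ '' K₁)) (hc₂ : IsClosed (Φ₂ '' K₂))
    (h₁ : ∀ y ∈ K₁, HasFDerivWithinAt φ (G₁ y) (Φ₁ '' K₁) (Φ₁ y))
    (h₂ : ∀ y ∈ K₂, HasFDerivWithinAt φ (G₂ y) (Φ₂ '' K₂) (Φ₂ y))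
    (hagree : ∀ y ∈ K₁, ∀ y' ∈ K₂, Φ₁ y = Φ₂ y' → G₁ y = G₂ y') {y : X} (hy : y ∈ K₁)
    (hnhds : Φ₁ '' K₁ ∪ Φ₂ '' K₂ ∈ 𝓝 (Φ₁ y)) : HasFDerivAt φ (G₁ y) (Φ₁ y) := by
  refine hasFDerivAt_of_isClosed_union hc₁ hc₂ hnhds (fun _ => h₁ y hy) ?_
  rintro ⟨y', hy', hyy'⟩
  rw [hagree y hy y' hy' hyy'.symm, ← hyy']
  exact h₂ y' hy'

noncomputable def pushforwardDeriv (Φ : E → F) (f : E → G) (x : E) : F →L[ℝ] G :=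
  (fderiv ℝ f x).comp (fderiv ℝ Φ x).inverse

variable {Φ : E → F} {f : E → G} {x : E}

theorem pushforwardDeriv_comp_fderiv (h : (fderiv ℝ Φ x).IsInvertible) :
    (pushforwardDeriv Φ f x).comp (fderiv ℝ Φ x) = fderiv ℝ f x := by
  ext v
  simp [pushforwardDeriv, h]

theorem eq_pushforwardDeriv_of_comp_eq (h : (fderiv ℝ Φ x).IsInvertible)
    {L : F →L[ℝ] G} (hL : L.comp (fderiv ℝ Φ x) = fderiv ℝ f x) :
    L = pushforwardDeriv Φ f x := by
  ext v
  simp [pushforwardDeriv, ← hL, h]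

variable [CompleteSpace E]

theorem hasFDerivWithinAt_pushforwardDeriv {K W : Set E} (hK : IsCompact K) (hW : IsOpen W)
    (hKW : K ⊆ W) (hΦ : ContDiffOn ℝ 1 Φ W) (hinj : InjOn Φ K) (hx : x ∈ K)
    (hinv : (fderiv ℝ Φ x).IsInvertible) (hf : DifferentiableAt ℝ f x) {φ : F → G}
    (hφ : ∀ y ∈ K, φ (Φ y) = f y) :
    HasFDerivWithinAt φ (pushforwardDeriv Φ f x) (Φ '' K) (Φ x) := by
  obtain ⟨e, he⟩ := hinv
  have hstrict : HasStrictFDerivAt Φ (e : E →L[ℝ] F) x :=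
    he ▸ ((hΦ x (hKW hx)).contDiffAt (hW.mem_nhds (hKW hx))).hasStrictFDerivAt one_ne_zero
  have hgx : hstrict.localInverse Φ e x (Φ x) = x := hstrict.localInverse_apply_image
  have hfg : HasFDerivAt (f ∘ hstrict.localInverse Φ e x) (pushforwardDeriv Φ f x) (Φ x) := by
    rw [pushforwardDeriv, ← he, ContinuousLinearMap.inverse_equiv]
    have hfx : HasFDerivAt f (fderiv ℝ f x) (hstrict.localInverse Φ e x (Φ x)) := by
      rw [hgx]; exact hf.hasFDerivAt
    exact hfx.comp _ hstrict.to_localInverse.hasFDerivAt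
  refine hfg.hasFDerivWithinAt.congr_of_eventuallyEq ?_ (by rw [Function.comp_apply, hgx, hφ x hx])
  rw [EventuallyEq, eventually_nhdsWithin_iff]
  -- by compactness, points of `Φ '' K` near `Φ x` are images of points near `x`, where the
  -- local inverse undoes `Φ`
  filter_upwards [hK.eventually_mem_of_injOn (hΦ.continuousOn.mono hKW) hinj hx
    hstrict.eventually_left_inverse] with q hq ⟨y, hy, hyq⟩
  subst hyq
  rw [Function.comp_apply, hφ y hy, hq y hy rfl]

theorem continuousOn_pushforwardDeriv {K W : Set E} (hW : IsOpen W) (hKW : K ⊆ W)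
    (hΦ : ContDiffOn ℝ 1 Φ W) (hf : ContDiffOn ℝ 1 f W)
    (hinv : ∀ x ∈ K, (fderiv ℝ Φ x).IsInvertible) :
    ContinuousOn (pushforwardDeriv Φ f) K := by
  have hdΦ := (hΦ.continuousOn_fderiv_of_isOpen hW le_rfl).mono hKW
  have hdf := (hf.continuousOn_fderiv_of_isOpen hW le_rfl).mono hKW
  refine hdf.clm_comp fun x hx => ?_
  exact ((hinv x hx).contDiffAt_map_inverse (n := 0)).continuousAt.comp_continuousWithinAt
    (hdΦ x hx)

theorem contDiffOn_of_pushforwardDeriv_eq {Φ₁ Φ₂ : E → F} {f₁ f₂ : E → G} {φ : F → G}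
    {K₁ K₂ W₁ W₂ : Set E} {Ω : Set F} (hK₁ : IsCompact K₁) (hK₂ : IsCompact K₂)
    (hW₁ : IsOpen W₁) (hW₂ : IsOpen W₂) (hKW₁ : K₁ ⊆ W₁) (hKW₂ : K₂ ⊆ W₂)
    (hΦ₁ : ContDiffOn ℝ 1 Φ₁ W₁) (hΦ₂ : ContDiffOn ℝ 1 Φ₂ W₂)
    (hf₁ : ContDiffOn ℝ 1 f₁ W₁) (hf₂ : ContDiffOn ℝ 1 f₂ W₂)
    (hinj₁ : InjOn Φ₁ K₁) (hinj₂ : InjOn Φ₂ K₂)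
    (hinv₁ : ∀ y ∈ K₁, (fderiv ℝ Φ₁ y).IsInvertible)
    (hinv₂ : ∀ y ∈ K₂, (fderiv ℝ Φ₂ y).IsInvertible)
    (hφ₁ : ∀ y ∈ K₁, φ (Φ₁ y) = f₁ y) (hφ₂ : ∀ y ∈ K₂, φ (Φ₂ y) = f₂ y)
    (hagree : ∀ y ∈ K₁, ∀ y' ∈ K₂, Φ₁ y = Φ₂ y' →
      pushforwardDeriv Φ₁ f₁ y = pushforwardDeriv Φ₂ f₂ y')
    (hΩ : IsOpen Ω) (hΩsub : Ω ⊆ Φ₁ '' K₁ ∪ Φ₂ '' K₂) : ContDiffOn ℝ 1 φ Ω := by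
  have hc₁ : ContinuousOn Φ₁ K₁ := hΦ₁.continuousOn.mono hKW₁
  have hc₂ : ContinuousOn Φ₂ K₂ := hΦ₂.continuousOn.mono hKW₂
  have hclosed₁ := (hK₁.image_of_continuousOn hc₁).isClosed
  have hclosed₂ := (hK₂.image_of_continuousOn hc₂).isClosed
  have hw₁ := fun y hy => hasFDerivWithinAt_pushforwardDeriv hK₁ hW₁ hKW₁ hΦ₁ hinj₁ hy
    (hinv₁ y hy) ((hf₁.differentiableOn one_ne_zero).differentiableAt (hW₁.mem_nhds (hKW₁ hy))) hφ₁
  have hw₂ := fun y hy => hasFDerivWithinAt_pushforwardDeriv hK₂ hW₂ hKW₂ hΦ₂ hinj₂ hy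
    (hinv₂ y hy) ((hf₂.differentiableOn one_ne_zero).differentiableAt (hW₂.mem_nhds (hKW₂ hy))) hφ₂
  have hd₁ : ∀ y ∈ K₁, Φ₁ y ∈ Ω → HasFDerivAt φ (pushforwardDeriv Φ₁ f₁ y) (Φ₁ y) :=
    fun y hy hyΩ => hasFDerivAt_of_image_pieces hclosed₁ hclosed₂ hw₁ hw₂ hagree hy
      (mem_of_superset (hΩ.mem_nhds hyΩ) hΩsub)
  have hd₂ : ∀ y ∈ K₂, Φ₂ y ∈ Ω → HasFDerivAt φ (pushforwardDeriv Φ₂ f₂ y) (Φ₂ y) :=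
    fun y hy hyΩ => hasFDerivAt_of_image_pieces hclosed₂ hclosed₁ hw₂ hw₁
      (fun y hy y' hy' h => (hagree y' hy' y hy h.symm).symm) hy
      (mem_of_superset (hΩ.mem_nhds hyΩ) (union_comm (Φ₁ '' K₁) _ ▸ hΩsub))
  have hG₁ := continuousOn_pushforwardDeriv hW₁ hKW₁ hΦ₁ hf₁ hinv₁
  have hG₂ := continuousOn_pushforwardDeriv hW₂ hKW₂ hΦ₂ hf₂ hinv₂
  refine (contDiffOn_succ_iff_fderiv_of_isOpen (n := 0) hΩ).2 ⟨?_, by simp, ?_⟩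
  · intro p hp
    rcases hΩsub hp with ⟨y, hy, rfl⟩ | ⟨y, hy, rfl⟩
    exacts [(hd₁ y hy hp).differentiableAt.differentiableWithinAt,
      (hd₂ y hy hp).differentiableAt.differentiableWithinAt]
  refine contDiffOn_zero.2 fun p hp => continuousWithinAt_of_isClosed_union hclosed₁ hclosed₂
    hΩsub ?_ ?_
  · rintro ⟨y, hy, rfl⟩
    exact hK₁.continuousWithinAt_image_inter hc₁ hinj₁ hy (hG₁ y hy)
      (fun y hy hyΩ => (hd₁ y hy hyΩ).fderiv) hp
  · rintro ⟨y, hy, rfl⟩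
    exact hK₂.continuousWithinAt_image_inter hc₂ hinj₂ hy (hG₂ y hy)
      (fun y hy hyΩ => (hd₂ y hy hyΩ).fderiv) hp

end Pushforward

section Partial

variable {E F : Type*} [NormedAddCommGroup E] [NormedSpace ℝ E]
  [NormedAddCommGroup F] [NormedSpace ℝ F] {f : ℝ × ℝ → E} {x : ℝ × ℝ}

theorem pd1_eq_fderiv (h : DifferentiableAt ℝ f x) : pd1 f x = fderiv ℝ f x (1, 0) := by
  have hline : HasDerivAt (fun s : ℝ => (s, x.2)) (1, 0) x.1 :=
    (hasDerivAt_id x.1).prodMk (hasDerivAt_const x.1 x.2)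
  exact (h.hasFDerivAt.comp_hasDerivAt x.1 hline).deriv

theorem pd2_eq_fderiv (h : DifferentiableAt ℝ f x) : pd2 f x = fderiv ℝ f x (0, 1) := by
  have hline : HasDerivAt (fun s : ℝ => (x.1, s)) (0, 1) x.2 :=
    (hasDerivAt_const x.2 x.1).prodMk (hasDerivAt_id x.2)
  exact (h.hasFDerivAt.comp_hasDerivAt x.2 hline).deriv

theorem comp_fderiv_eq_iff {Φ : ℝ × ℝ → F} (hΦ : DifferentiableAt ℝ Φ x)
    (hf : DifferentiableAt ℝ f x) (L : F →L[ℝ] E) :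
    L.comp (fderiv ℝ Φ x) = fderiv ℝ f x ↔ L (pd1 Φ x) = pd1 f x ∧ L (pd2 Φ x) = pd2 f x := by
  rw [pd1_eq_fderiv hΦ, pd1_eq_fderiv hf, pd2_eq_fderiv hΦ, pd2_eq_fderiv hf]
  constructor
  · intro h
    simp [← h]
  · rintro ⟨h1, h2⟩
    ext
    exacts [h1, h2]

theorem ContDiffOn.continuousOn_pd1 {V : Set (ℝ × ℝ)} (hV : IsOpen V)
    (hf : ContDiffOn ℝ 1 f V) : ContinuousOn (pd1 f) V :=
  ((hf.continuousOn_fderiv_of_isOpen hV le_rfl).clm_apply continuousOn_const).congr fun _ hy =>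
    pd1_eq_fderiv (hf.differentiableOn one_ne_zero |>.differentiableAt (hV.mem_nhds hy))

theorem ContDiffOn.continuousOn_pd2 {V : Set (ℝ × ℝ)} (hV : IsOpen V)
    (hf : ContDiffOn ℝ 1 f V) : ContinuousOn (pd2 f) V :=
  ((hf.continuousOn_fderiv_of_isOpen hV le_rfl).clm_apply continuousOn_const).congr fun _ hy =>
    pd2_eq_fderiv (hf.differentiableOn one_ne_zero |>.differentiableAt (hV.mem_nhds hy))

theorem pd2_eq_pd1_of_edge {g₁ g₂ : ℝ × ℝ → E} {η : ℝ} (hη : η ∈ Icc (0 : ℝ) 1)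
    (h₁ : DifferentiableAt ℝ g₁ (0, η)) (h₂ : DifferentiableAt ℝ g₂ (η, 0))
    (hg : ∀ ξ ∈ Icc (0 : ℝ) 1, g₁ (0, ξ) = g₂ (ξ, 0)) : pd2 g₁ (0, η) = pd1 g₂ (η, 0) := by
  have d₁ : HasDerivAt (fun s => g₁ (0, s)) (pd2 g₁ (0, η)) η :=
    (h₁.comp η ((differentiableAt_const _).prodMk differentiableAt_id)).hasDerivAt
  have d₂ : HasDerivAt (fun s => g₂ (s, 0)) (pd1 g₂ (η, 0)) η :=
    (h₂.comp η (differentiableAt_id.prodMk (differentiableAt_const _))).hasDerivAt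
  exact (uniqueDiffOn_Icc zero_lt_one η hη).eq_deriv _
    (d₁.hasDerivWithinAt.congr (fun ξ hξ => (hg ξ hξ).symm) (hg η hη).symm) d₂.hasDerivWithinAt

end Partial

theorem DifferentiableAt.isInvertible_fderiv_of_det2_ne_zero {F : ℝ × ℝ → ℝ × ℝ} {x : ℝ × ℝ}
    (hF : DifferentiableAt ℝ F x) (h : det2 (pd1 F x) (pd2 F x) ≠ 0) :
    (fderiv ℝ F x).IsInvertible := by
  rw [pd1_eq_fderiv hF, pd2_eq_fderiv hF] at h
  set a := fderiv ℝ F x (1, 0)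
  set b := fderiv ℝ F x (0, 1)
  have hinj : Function.Injective (fderiv ℝ F x) := by
    refine (injective_iff_map_eq_zero _).2 fun v hv => ?_
    have hcomb : v.1 • a + v.2 • b = 0 := by
      rw [← map_smul, ← map_smul, ← map_add, ← hv]
      congr 1
      ext <;> simp
    simp only [Prod.ext_iff, Prod.fst_add, Prod.snd_add, Prod.smul_fst, Prod.smul_snd,
      smul_eq_mul, Prod.fst_zero, Prod.snd_zero] at hcomb
    have h1 : v.1 * det2 a b = 0 := by
      unfold det2; linear_combination b.2 * hcomb.1 - b.1 * hcomb.2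
    have h2 : v.2 * det2 a b = 0 := by
      unfold det2; linear_combination a.1 * hcomb.2 - a.2 * hcomb.1
    exact Prod.ext ((mul_eq_zero.1 h1).resolve_right h) ((mul_eq_zero.1 h2).resolve_right h)
  exact ⟨(LinearEquiv.ofInjectiveEndo _ hinj).toContinuousLinearEquiv, by ext <;> simp⟩

theorem isCompact_square : IsCompact square := isCompact_Icc.prod isCompact_Icc

theorem mk_zero_mem_square {ξ : ℝ} (hξ : ξ ∈ Icc (0 : ℝ) 1) : ((0 : ℝ), ξ) ∈ square :=
  ⟨left_mem_Icc.2 zero_le_one, hξ⟩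

theorem mk_mem_square_zero {ξ : ℝ} (hξ : ξ ∈ Icc (0 : ℝ) 1) : (ξ, (0 : ℝ)) ∈ square :=
  ⟨hξ, left_mem_Icc.2 zero_le_one⟩

theorem uniqueDiffOn_square : UniqueDiffOn ℝ square :=
  (uniqueDiffOn_Icc zero_lt_one).prod (uniqueDiffOn_Icc zero_lt_one)

section TwoPatch

variable {G : Type*} [NormedAddCommGroup G] [NormedSpace ℝ G]
  {F1 F2 : ℝ × ℝ → ℝ × ℝ} {f1 f2 : ℝ × ℝ → G} {a₁ a₂ b η : ℝ}

theorem exists_edge_of_image_eq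
    (hinj1 : InjOn F1 square) (hinj2 : InjOn F2 square)
    (hcompat : ∀ ξ ∈ Icc (0:ℝ) 1, F1 (0, ξ) = F2 (ξ, 0))
    (hinter : F1 '' square ∩ F2 '' square = F1 '' (({0} : Set ℝ) ×ˢ Icc (0:ℝ) 1))
    {y y' : ℝ × ℝ} (hy : y ∈ square) (hy' : y' ∈ square) (h : F1 y = F2 y') :
    ∃ ξ ∈ Icc (0:ℝ) 1, y = (0, ξ) ∧ y' = (ξ, 0) := by
  obtain ⟨⟨z₁, ξ⟩, ⟨hz₁, hξ⟩, hzy⟩ : F1 y ∈ F1 '' (({0} : Set ℝ) ×ˢ Icc (0:ℝ) 1) :=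
    hinter ▸ ⟨mem_image_of_mem F1 hy, h ▸ mem_image_of_mem F2 hy'⟩
  obtain rfl : z₁ = 0 := hz₁
  refine ⟨ξ, hξ, hinj1 hy (mk_zero_mem_square hξ) hzy.symm, ?_⟩
  exact hinj2 hy' (mk_mem_square_zero hξ) (by rw [← h, ← hzy, hcompat ξ hξ])

theorem pushforwardDeriv_edge_eq (hη : η ∈ Icc (0:ℝ) 1) (ha₁ : a₁ ≠ 0)
    (hdF1 : DifferentiableAt ℝ F1 (0, η)) (hdF2 : DifferentiableAt ℝ F2 (η, 0))
    (hdf1 : DifferentiableAt ℝ f1 (0, η)) (hdf2 : DifferentiableAt ℝ f2 (η, 0))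
    (hinv1 : (fderiv ℝ F1 (0, η)).IsInvertible) (hinv2 : (fderiv ℝ F2 (η, 0)).IsInvertible)
    (hcompat : ∀ ξ ∈ Icc (0:ℝ) 1, F1 (0, ξ) = F2 (ξ, 0))
    (htrace : ∀ ξ ∈ Icc (0:ℝ) 1, f1 (0, ξ) = f2 (ξ, 0))
    (hglueF : a₁ • pd2 F2 (η, 0) + a₂ • pd1 F1 (0, η) + b • pd2 F1 (0, η) = 0)
    (hgluef : a₁ • pd2 f2 (η, 0) + a₂ • pd1 f1 (0, η) + b • pd2 f1 (0, η) = 0) :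
    pushforwardDeriv F1 f1 (0, η) = pushforwardDeriv F2 f2 (η, 0) := by
  set L := pushforwardDeriv F1 f1 (0, η)
  obtain ⟨h1, h2⟩ := (comp_fderiv_eq_iff hdF1 hdf1 L).1 (pushforwardDeriv_comp_fderiv hinv1)
  refine eq_pushforwardDeriv_of_comp_eq hinv2 ((comp_fderiv_eq_iff hdF2 hdf2 L).2 ⟨?_, ?_⟩)
  · rw [← pd2_eq_pd1_of_edge hη hdF1 hdF2 hcompat, ← pd2_eq_pd1_of_edge hη hdf1 hdf2 htrace, h2]
  · exact map_eq_of_linear_relation L.toLinearMap ha₁ hglueF hgluef h1 h2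

theorem gluing_of_differentiableAt {φ : ℝ × ℝ → G} (hη : η ∈ Icc (0:ℝ) 1)
    (hφ : DifferentiableAt ℝ φ (F1 (0, η)))
    (hdF1 : DifferentiableAt ℝ F1 (0, η)) (hdF2 : DifferentiableAt ℝ F2 (η, 0))
    (hdf1 : DifferentiableAt ℝ f1 (0, η)) (hdf2 : DifferentiableAt ℝ f2 (η, 0))
    (hcompat : F1 (0, η) = F2 (η, 0))
    (hφ1 : ∀ x ∈ square, φ (F1 x) = f1 x) (hφ2 : ∀ x ∈ square, φ (F2 x) = f2 x)
    (hglueF : a₁ • pd2 F2 (η, 0) + a₂ • pd1 F1 (0, η) + b • pd2 F1 (0, η) = 0) :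
    a₁ • pd2 f2 (η, 0) + a₂ • pd1 f1 (0, η) + b • pd2 f1 (0, η) = 0 := by
  have hx1 := mk_zero_mem_square hη
  have hx2 := mk_mem_square_zero hη
  obtain ⟨e11, e12⟩ := (comp_fderiv_eq_iff hdF1 hdf1 _).1
    ((uniqueDiffOn_square _ hx1).comp_fderiv_eq hx1 hφ hdF1 hdf1 hφ1)
  obtain ⟨-, e22⟩ := (comp_fderiv_eq_iff hdF2 hdf2 _).1
    ((uniqueDiffOn_square _ hx2).comp_fderiv_eq hx2 (hcompat ▸ hφ) hdF2 hdf2 hφ2)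
  rw [← e11, ← e12, ← e22, ← hcompat]
  simpa only [map_add, map_smul, map_zero] using congrArg (fderiv ℝ φ (F1 (0, η))) hglueF

theorem continuousOn_gluing {α₁ α₂ β : ℝ → ℝ} (hα₁ : ContinuousOn α₁ (Icc 0 1))
    (hα₂ : ContinuousOn α₂ (Icc 0 1)) (hβ : ContinuousOn β (Icc 0 1)) {V1 V2 : Set (ℝ × ℝ)}
    (hV1 : IsOpen V1) (hV2 : IsOpen V2) (hsqV1 : square ⊆ V1) (hsqV2 : square ⊆ V2)
    (hf1 : ContDiffOn ℝ 1 f1 V1) (hf2 : ContDiffOn ℝ 1 f2 V2) :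
    ContinuousOn (fun ξ => α₁ ξ • pd2 f2 (ξ, 0) + α₂ ξ • pd1 f1 (0, ξ) + β ξ • pd2 f1 (0, ξ))
      (Icc 0 1) := by
  have hedge1 : MapsTo (fun ξ : ℝ => ((0 : ℝ), ξ)) (Icc 0 1) V1 :=
    fun ξ hξ => hsqV1 (mk_zero_mem_square hξ)
  have hedge2 : MapsTo (fun ξ : ℝ => (ξ, (0 : ℝ))) (Icc 0 1) V2 :=
    fun ξ hξ => hsqV2 (mk_mem_square_zero hξ)
  have hline1 : Continuous fun ξ : ℝ => ((0 : ℝ), ξ) := continuous_const.prodMk continuous_id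
  have hline2 : Continuous fun ξ : ℝ => (ξ, (0 : ℝ)) := continuous_id.prodMk continuous_const
  exact ((hα₁.smul ((hf2.continuousOn_pd2 hV2).comp hline2.continuousOn hedge2)).add
    (hα₂.smul ((hf1.continuousOn_pd1 hV1).comp hline1.continuousOn hedge1))).add
    (hβ.smul ((hf1.continuousOn_pd2 hV1).comp hline1.continuousOn hedge1))

end TwoPatch

/-- Two-patch characterization of `C¹` isogeometric functions: with gluing data
`α₁, α₂, β` satisfying the sign condition and the geometric gluing identity, an
isogeometric function `φ` (with pullbacks `f⁽¹⁾, f⁽²⁾` agreeing on the interface)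
is continuously differentiable on `Ω` iff the gluing condition holds for the
pullbacks. -/
theorem stmt4
    (F1 F2 : ℝ × ℝ → ℝ × ℝ) (U1 U2 : Set (ℝ × ℝ))
    (hU1 : IsOpen U1) (hU2 : IsOpen U2) (hsqU1 : square ⊆ U1) (hsqU2 : square ⊆ U2)
    (hF1 : ContDiffOn ℝ 1 F1 U1) (hF2 : ContDiffOn ℝ 1 F2 U2)
    (hinj1 : Set.InjOn F1 square) (hinj2 : Set.InjOn F2 square)
    (hjac1 : ∀ x ∈ square, 0 < det2 (pd1 F1 x) (pd2 F1 x))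
    (hjac2 : ∀ x ∈ square, 0 < det2 (pd1 F2 x) (pd2 F2 x))
    (hcompat : ∀ ξ ∈ Set.Icc (0:ℝ) 1, F1 (0, ξ) = F2 (ξ, 0))
    (hinter : F1 '' square ∩ F2 '' square = F1 '' (({0} : Set ℝ) ×ˢ Set.Icc (0:ℝ) 1))
    (Ω : Set (ℝ × ℝ)) (hΩ : Ω = interior (F1 '' square ∪ F2 '' square))
    (hΩedge : ∀ ξ ∈ Set.Ioo (0:ℝ) 1, F1 (0, ξ) ∈ Ω)
    (α₁ α₂ β : ℝ → ℝ)
    (hα₁ : ContinuousOn α₁ (Set.Icc 0 1)) (hα₂ : ContinuousOn α₂ (Set.Icc 0 1))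
    (hβc : ContinuousOn β (Set.Icc 0 1))
    (hsign : ∀ ξ ∈ Set.Icc (0:ℝ) 1, 0 < α₁ ξ * α₂ ξ)
    (hglueF : ∀ ξ ∈ Set.Icc (0:ℝ) 1,
      α₁ ξ • pd2 F2 (ξ, 0) + α₂ ξ • pd1 F1 (0, ξ) + β ξ • pd2 F1 (0, ξ) = 0)
    (f1 f2 : ℝ × ℝ → ℝ) (V1 V2 : Set (ℝ × ℝ))
    (hV1 : IsOpen V1) (hV2 : IsOpen V2) (hsqV1 : square ⊆ V1) (hsqV2 : square ⊆ V2)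
    (hf1 : ContDiffOn ℝ 1 f1 V1) (hf2 : ContDiffOn ℝ 1 f2 V2)
    (htrace : ∀ ξ ∈ Set.Icc (0:ℝ) 1, f1 (0, ξ) = f2 (ξ, 0))
    (φ : ℝ × ℝ → ℝ)
    (hφ1 : ∀ x ∈ square, φ (F1 x) = f1 x) (hφ2 : ∀ x ∈ square, φ (F2 x) = f2 x) :
    ContDiffOn ℝ 1 φ Ω ↔
      ∀ ξ ∈ Set.Icc (0:ℝ) 1,
        α₁ ξ * pd2 f2 (ξ, 0) + α₂ ξ * pd1 f1 (0, ξ) + β ξ * pd2 f1 (0, ξ) = 0 := by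
  have hΩopen : IsOpen Ω := hΩ ▸ isOpen_interior
  have hdF1 : ∀ y ∈ square, DifferentiableAt ℝ F1 y := fun y hy =>
    (hF1.contDiffAt (hU1.mem_nhds (hsqU1 hy))).differentiableAt one_ne_zero
  have hdF2 : ∀ y ∈ square, DifferentiableAt ℝ F2 y := fun y hy =>
    (hF2.contDiffAt (hU2.mem_nhds (hsqU2 hy))).differentiableAt one_ne_zero
  have hdf1 : ∀ y ∈ square, DifferentiableAt ℝ f1 y := fun y hy =>
    (hf1.contDiffAt (hV1.mem_nhds (hsqV1 hy))).differentiableAt one_ne_zero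
  have hdf2 : ∀ y ∈ square, DifferentiableAt ℝ f2 y := fun y hy =>
    (hf2.contDiffAt (hV2.mem_nhds (hsqV2 hy))).differentiableAt one_ne_zero
  have hinv1 : ∀ y ∈ square, (fderiv ℝ F1 y).IsInvertible := fun y hy =>
    (hdF1 y hy).isInvertible_fderiv_of_det2_ne_zero (hjac1 y hy).ne'
  have hinv2 : ∀ y ∈ square, (fderiv ℝ F2 y).IsInvertible := fun y hy =>
    (hdF2 y hy).isInvertible_fderiv_of_det2_ne_zero (hjac2 y hy).ne'
  constructor
  · intro hφ
    have hinner : EqOn (fun ξ => α₁ ξ * pd2 f2 (ξ, 0) + α₂ ξ * pd1 f1 (0, ξ) + β ξ * pd2 f1 (0, ξ))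
        0 (Ioo 0 1) := fun ξ hξo => by
      have hξ := Ioo_subset_Icc_self hξo
      exact gluing_of_differentiableAt hξ
        ((hφ.contDiffAt (hΩopen.mem_nhds (hΩedge ξ hξo))).differentiableAt one_ne_zero)
        (hdF1 _ (mk_zero_mem_square hξ)) (hdF2 _ (mk_mem_square_zero hξ))
        (hdf1 _ (mk_zero_mem_square hξ)) (hdf2 _ (mk_mem_square_zero hξ))
        (hcompat ξ hξ) hφ1 hφ2 (hglueF ξ hξ)
    exact fun ξ hξ => hinner.of_subset_closure
      (continuousOn_gluing hα₁ hα₂ hβc hV1 hV2 hsqV1 hsqV2 hf1 hf2) continuousOn_const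
      Ioo_subset_Icc_self (by rw [closure_Ioo zero_ne_one]) hξ
  · intro hgluef
    refine contDiffOn_of_pushforwardDeriv_eq isCompact_square isCompact_square
      (hU1.inter hV1) (hU2.inter hV2) (subset_inter hsqU1 hsqV1) (subset_inter hsqU2 hsqV2)
      (hF1.mono inter_subset_left) (hF2.mono inter_subset_left)
      (hf1.mono inter_subset_right) (hf2.mono inter_subset_right)
      hinj1 hinj2 hinv1 hinv2 hφ1 hφ2 ?_ hΩopen (hΩ ▸ interior_subset)
    intro y hy y' hy' h
    obtain ⟨ξ, hξ, rfl, rfl⟩ := exists_edge_of_image_eq hinj1 hinj2 hcompat hinter hy hy' h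
    exact pushforwardDeriv_edge_eq hξ (left_ne_zero_of_mul (hsign ξ hξ).ne') (hdF1 _ hy)
      (hdF2 _ hy') (hdf1 _ hy) (hdf2 _ hy') (hinv1 _ hy) (hinv2 _ hy') hcompat htrace
      (hglueF ξ hξ) (hgluef ξ hξ)
end

section
/- Let α₁, α₂, β₁, β₂ : [0,1] → ℝ be C¹ and set β = α₁β₂ + α₂β₁. Let b : [0,1] → ℝ be C², and let c₀, c₁ : [0,1] → ℝ be C¹ with c₀(0) = 1, c₀′(0) = 0, c₁(0) = 0, c₁′(0) = 1. Define f⁽¹⁾(ξ₁,ξ₂) = b(ξ₂)c₀(ξ₁) − β₁(ξ₂)b′(ξ₂)c₁(ξ₁) and f⁽²⁾(ξ₁,ξ₂) = b(ξ₁)c₀(ξ₂) − β₂(ξ₁)b′(ξ₁)c₁(ξ₂) on [0,1]². Then for all ξ ∈ [0,1]: f⁽¹⁾(0,ξ) = f⁽²⁾(ξ,0) = b(ξ), and α₁(ξ)∂₂f⁽²⁾(ξ,0) + α₂(ξ)∂₁f⁽¹⁾(0,ξ) + β(ξ)∂₂f⁽¹⁾(0,ξ) = 0. -/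
section EdgeFunction

variable {c₀ c₁ : ℝ → ℝ}

theorem hasDerivAt_mul_sub_mul_zero (hc₀ : HasDerivAt c₀ 0 0) (hc₁ : HasDerivAt c₁ 1 0)
    (p q : ℝ) : HasDerivAt (fun s => p * c₀ s - q * c₁ s) (-q) 0 := by
  simpa using (hc₀.const_mul p).fun_sub (hc₁.const_mul q)

theorem pd1_edge_eq (hc₀ : HasDerivAt c₀ 0 0) (hc₁ : HasDerivAt c₁ 1 0) (u v : ℝ → ℝ) (ξ : ℝ) :
    pd1 (fun x => u x.2 * c₀ x.1 - v x.2 * c₁ x.1) (0, ξ) = -v ξ :=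
  (hasDerivAt_mul_sub_mul_zero hc₀ hc₁ (u ξ) (v ξ)).deriv

theorem pd2_edge_eq (hc₀ : HasDerivAt c₀ 0 0) (hc₁ : HasDerivAt c₁ 1 0) (u v : ℝ → ℝ) (ξ : ℝ) :
    pd2 (fun x => u x.1 * c₀ x.2 - v x.1 * c₁ x.2) (ξ, 0) = -v ξ :=
  (hasDerivAt_mul_sub_mul_zero hc₀ hc₁ (u ξ) (v ξ)).deriv

theorem pd2_edge_eq_deriv (hc₀ : c₀ 0 = 1) (hc₁ : c₁ 0 = 0) (u v : ℝ → ℝ) (ξ : ℝ) :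
    pd2 (fun x => u x.2 * c₀ x.1 - v x.2 * c₁ x.1) (0, ξ) = deriv u ξ := by
  simp [pd2, hc₀, hc₁]

end EdgeFunction

theorem stmt7_general (α₁ α₂ β₁ β₂ : ℝ → ℝ)
    (β : ℝ → ℝ) (hβ : β = fun ξ => α₁ ξ * β₂ ξ + α₂ ξ * β₁ ξ)
    (b : ℝ → ℝ)
    (c₀ c₁ : ℝ → ℝ) (hc₀ : ContDiff ℝ 1 c₀)
    (hc₀0 : c₀ 0 = 1) (hc₀'0 : deriv c₀ 0 = 0)
    (hc₁0 : c₁ 0 = 0) (hc₁'0 : deriv c₁ 0 = 1)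
    (f1 f2 : ℝ × ℝ → ℝ)
    (hf1 : f1 = fun ξ => b ξ.2 * c₀ ξ.1 - β₁ ξ.2 * deriv b ξ.2 * c₁ ξ.1)
    (hf2 : f2 = fun ξ => b ξ.1 * c₀ ξ.2 - β₂ ξ.1 * deriv b ξ.1 * c₁ ξ.2) :
    ∀ ξ ∈ Set.Icc (0:ℝ) 1,
      f1 (0, ξ) = b ξ ∧ f2 (ξ, 0) = b ξ ∧
      α₁ ξ * pd2 f2 (ξ, 0) + α₂ ξ * pd1 f1 (0, ξ) + β ξ * pd2 f1 (0, ξ) = 0 := by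
  subst hf1 hf2 hβ
  intro ξ _
  have hc₀' : HasDerivAt c₀ 0 0 :=
    (hc₀.differentiable one_ne_zero 0).hasDerivAt.congr_deriv hc₀'0
  have hc₁' : HasDerivAt c₁ 1 0 :=
    (differentiableAt_of_deriv_ne_zero (by simp [hc₁'0])).hasDerivAt.congr_deriv hc₁'0
  refine ⟨by simp [hc₀0, hc₁0], by simp [hc₀0, hc₁0], ?_⟩
  rw [pd2_edge_eq hc₀' hc₁' b (fun s => β₂ s * deriv b s),
    pd1_edge_eq hc₀' hc₁' b (fun s => β₁ s * deriv b s),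
    pd2_edge_eq_deriv hc₀0 hc₁0 b (fun s => β₁ s * deriv b s)]
  ring

/-- The pair of pullbacks of a trace-type edge basis function satisfies the trace
identity `f⁽¹⁾(0,ξ) = f⁽²⁾(ξ,0) = b(ξ)` and the `C¹` gluing condition with gluing data
`α₁, α₂` and `β = α₁β₂ + α₂β₁`. -/
theorem stmt7 (α₁ α₂ β₁ β₂ : ℝ → ℝ)
    (hα₁ : ContDiff ℝ 1 α₁) (hα₂ : ContDiff ℝ 1 α₂)
    (hβ₁ : ContDiff ℝ 1 β₁) (hβ₂ : ContDiff ℝ 1 β₂)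
    (β : ℝ → ℝ) (hβ : β = fun ξ => α₁ ξ * β₂ ξ + α₂ ξ * β₁ ξ)
    (b : ℝ → ℝ) (hb : ContDiff ℝ 2 b)
    (c₀ c₁ : ℝ → ℝ) (hc₀ : ContDiff ℝ 1 c₀) (hc₁ : ContDiff ℝ 1 c₁)
    (hc₀0 : c₀ 0 = 1) (hc₀'0 : deriv c₀ 0 = 0)
    (hc₁0 : c₁ 0 = 0) (hc₁'0 : deriv c₁ 0 = 1)
    (f1 f2 : ℝ × ℝ → ℝ)
    (hf1 : f1 = fun ξ => b ξ.2 * c₀ ξ.1 - β₁ ξ.2 * deriv b ξ.2 * c₁ ξ.1)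
    (hf2 : f2 = fun ξ => b ξ.1 * c₀ ξ.2 - β₂ ξ.1 * deriv b ξ.1 * c₁ ξ.2) :
    ∀ ξ ∈ Set.Icc (0:ℝ) 1,
      f1 (0, ξ) = b ξ ∧ f2 (ξ, 0) = b ξ ∧
      α₁ ξ * pd2 f2 (ξ, 0) + α₂ ξ * pd1 f1 (0, ξ) + β ξ * pd2 f1 (0, ξ) = 0 :=
  stmt7_general α₁ α₂ β₁ β₂ β hβ b c₀ c₁ hc₀ hc₀0 hc₀'0 hc₁0 hc₁'0 f1 f2 hf1 hf2
end

section
/- Edge-form setting: let c₀⁺, c₁⁺, c₂⁺ : [0,1] → ℝ be C² with the i-th derivative of c_j⁺ at 0 equal to δ_{ij} for 0 ≤ i, j ≤ 2; let c₀⁻, c₁⁻ : [0,1] → ℝ be C¹ with the i-th derivative of c_j⁻ at 0 equal to δ_{ij} for 0 ≤ i, j ≤ 1; let c₀, c₁, b₁ : [0,1] → ℝ be C¹ with c₀(0) = 1, c₀′(0) = 0, c₁(0) = 0, c₁′(0) = 1, b₁(0) = 0 and b₁′(0) = λ ≠ 0; and let α, β : [0,1] → ℝ be C¹ with α(0) ≠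 0. For d = (d₀₀, d₀₁, d₀₂, d₁₀, d₁₁) ∈ ℝ⁵ define f_d(ξ₁,ξ₂) = Σ_{j=0}^{2} d₀ⱼ (c_j⁺(ξ₂)c₀(ξ₁) − β(ξ₂)(c_j⁺)′(ξ₂)c₁(ξ₁)) + Σ_{j=0}^{1} d₁ⱼ α(ξ₂)c_j⁻(ξ₂)b₁(ξ₁). Then f_d(0,0) = d₀₀, ∂₂f_d(0,0) = d₀₁, ∂₂²f_d(0,0) = d₀₂, ∂₁f_d(0,0) = λα(0)d₁₀ − β(0)d₀₁, and ∂₁∂₂f_d(0,0) = λα(0)d₁₁ − β(0)d₀₂ + λα′(0)d₁₀ − β′(0)d₀₁; consequently, for every prescribed vector of values (f(0,0), ∂₂f(0,0), ∂₂²f(0,0), ∂₁f(0,0), ∂₁∂₂f(0,0)) ∈ ℝ⁵ there exists a unique d ∈ ℝ⁵ realizing it. -/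
/-- The generic element `f_d` of the five-dimensional vertex-edge space, with
coefficients `d = (d₀₀, d₀₁, d₀₂, d₁₀, d₁₁)`. -/
noncomputable def fEdge (cp₀ cp₁ cp₂ cm₀ cm₁ c₀ c₁ b₁ α β : ℝ → ℝ)
    (d : ℝ × ℝ × ℝ × ℝ × ℝ) : ℝ × ℝ → ℝ := fun ξ =>
  d.1 * (cp₀ ξ.2 * c₀ ξ.1 - β ξ.2 * deriv cp₀ ξ.2 * c₁ ξ.1)
  + d.2.1 * (cp₁ ξ.2 * c₀ ξ.1 - β ξ.2 * deriv cp₁ ξ.2 * c₁ ξ.1)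
  + d.2.2.1 * (cp₂ ξ.2 * c₀ ξ.1 - β ξ.2 * deriv cp₂ ξ.2 * c₁ ξ.1)
  + d.2.2.2.1 * (α ξ.2 * cm₀ ξ.2 * b₁ ξ.1)
  + d.2.2.2.2 * (α ξ.2 * cm₁ ξ.2 * b₁ ξ.1)

/-- The Hermite data of a function at the corner `(0,0)`:
`(f(0,0), ∂₂f(0,0), ∂₂²f(0,0), ∂₁f(0,0), ∂₁∂₂f(0,0))`. -/
noncomputable def edgeData (f : ℝ × ℝ → ℝ) : ℝ × ℝ × ℝ × ℝ × ℝ :=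
  (f (0, 0), pd2 f (0, 0), pd2 (pd2 f) (0, 0), pd1 f (0, 0), pd1 (pd2 f) (0, 0))

/-! Grouping the coefficients, `f_d(ξ) = P(ξ₂) c₀(ξ₁) − β(ξ₂) P′(ξ₂) c₁(ξ₁) + R(ξ₂) b₁(ξ₁)`
with `P = Σ d₀ⱼ c_j⁺` and `R = α (d₁₀ c₀⁻ + d₁₁ c₁⁻)`. On the edge `ξ₁ = 0` this is `P`, so the
`ξ₂`-data are the Hermite data `(d₀₀, d₀₁, d₀₂)` of `P`. The `ξ₁`-derivative on that edge only
sees `c₀′(0) = 0`, `c₁′(0) = 1`, `b₁′(0) = λ`: it is `λ R − β P′`, and differentiating once more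
in `ξ₂` gives the cross derivative. The map from `d` to the data is therefore block lower
triangular with diagonal `(1, 1, 1, λ α(0), λ α(0))`, hence bijective. -/

def edgeForm (P Q R c₀ c₁ b : ℝ → ℝ) : ℝ × ℝ → ℝ :=
  fun ξ => P ξ.2 * c₀ ξ.1 - Q ξ.2 * c₁ ξ.1 + R ξ.2 * b ξ.1

section edgeForm

variable {P Q R c₀ c₁ b : ℝ → ℝ}

theorem pd1_edgeForm {x y : ℝ} (hc₀ : DifferentiableAt ℝ c₀ x)
    (hc₁ : DifferentiableAt ℝ c₁ x) (hb : DifferentiableAt ℝ b x) :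
    pd1 (edgeForm P Q R c₀ c₁ b) (x, y)
      = edgeForm P Q R (deriv c₀) (deriv c₁) (deriv b) (x, y) :=
  (((hc₀.hasDerivAt.const_mul (P y)).sub (hc₁.hasDerivAt.const_mul (Q y))).add
    (hb.hasDerivAt.const_mul (R y))).deriv

theorem pd2_edgeForm {x y : ℝ} (hP : DifferentiableAt ℝ P y)
    (hQ : DifferentiableAt ℝ Q y) (hR : DifferentiableAt ℝ R y) :
    pd2 (edgeForm P Q R c₀ c₁ b) (x, y)
      = edgeForm (deriv P) (deriv Q) (deriv R) c₀ c₁ b (x, y) :=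
  (((hP.hasDerivAt.mul_const (c₀ x)).sub (hQ.hasDerivAt.mul_const (c₁ x))).add
    (hR.hasDerivAt.mul_const (b x))).deriv

theorem edgeForm_zero_left (hc₀ : c₀ 0 = 1) (hc₁ : c₁ 0 = 0) (hb : b 0 = 0) (s : ℝ) :
    edgeForm P Q R c₀ c₁ b (0, s) = P s := by
  simp [edgeForm, hc₀, hc₁, hb]

theorem edgeData_edgeForm (hP : DifferentiableAt ℝ P 0) (hQ : DifferentiableAt ℝ Q 0)
    (hR : DifferentiableAt ℝ R 0) (hc₀ : DifferentiableAt ℝ c₀ 0)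
    (hc₁ : DifferentiableAt ℝ c₁ 0) (hb : DifferentiableAt ℝ b 0)
    (hc₀0 : c₀ 0 = 1) (hc₀1 : deriv c₀ 0 = 0) (hc₁0 : c₁ 0 = 0) (hc₁1 : deriv c₁ 0 = 1)
    (hb0 : b 0 = 0) :
    edgeData (edgeForm P Q R c₀ c₁ b) = (P 0, deriv P 0, deriv (deriv P) 0,
      R 0 * deriv b 0 - Q 0, deriv R 0 * deriv b 0 - deriv Q 0) := by
  have hcross : pd1 (pd2 (edgeForm P Q R c₀ c₁ b)) (0, 0)
      = pd1 (edgeForm (deriv P) (deriv Q) (deriv R) c₀ c₁ b) (0, 0) := by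
    simp only [pd1]
    congr 1
    funext s
    exact pd2_edgeForm hP hQ hR
  simp only [edgeData, hcross, pd1_edgeForm hc₀ hc₁ hb, pd2, edgeForm_zero_left hc₀0 hc₁0 hb0]
  simp [edgeForm, hc₀1, hc₁1, sub_eq_neg_add]

end edgeForm

theorem hasDerivAt_linComb₃ {f₀ f₁ f₂ : ℝ → ℝ} {x : ℝ} (a₀ a₁ a₂ : ℝ)
    (h₀ : DifferentiableAt ℝ f₀ x) (h₁ : DifferentiableAt ℝ f₁ x)
    (h₂ : DifferentiableAt ℝ f₂ x) :
    HasDerivAt (fun s => a₀ * f₀ s + a₁ * f₁ s + a₂ * f₂ s)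
      (a₀ * deriv f₀ x + a₁ * deriv f₁ x + a₂ * deriv f₂ x) x :=
  ((h₀.hasDerivAt.const_mul a₀).fun_add (h₁.hasDerivAt.const_mul a₁)).fun_add
    (h₂.hasDerivAt.const_mul a₂)

def edgeCoeffMap (κ β₀ μ β₁ : ℝ) (d : ℝ × ℝ × ℝ × ℝ × ℝ) : ℝ × ℝ × ℝ × ℝ × ℝ :=
  (d.1, d.2.1, d.2.2.1, κ * d.2.2.2.1 - β₀ * d.2.1,
    κ * d.2.2.2.2 - β₀ * d.2.2.1 + μ * d.2.2.2.1 - β₁ * d.2.1)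

theorem edgeCoeffMap_bijective {κ : ℝ} (hκ : κ ≠ 0) (β₀ μ β₁ : ℝ) :
    Function.Bijective (edgeCoeffMap κ β₀ μ β₁) := by
  refine Function.bijective_iff_has_inverse.mpr
    ⟨fun w => (w.1, w.2.1, w.2.2.1, (w.2.2.2.1 + β₀ * w.2.1) / κ,
      (w.2.2.2.2 + β₀ * w.2.2.1 - μ * ((w.2.2.2.1 + β₀ * w.2.1) / κ) + β₁ * w.2.1) / κ),
      fun d => ?_, fun w => ?_⟩ <;>
  simp only [edgeCoeffMap, Prod.ext_iff, true_and]
  · constructor <;> field_simp <;> ring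
  · constructor <;> field_simp <;> ring

section fEdge

variable {cp₀ cp₁ cp₂ cm₀ cm₁ c₀ c₁ b₁ α β : ℝ → ℝ}

theorem fEdge_eq_edgeForm (d : ℝ × ℝ × ℝ × ℝ × ℝ) :
    fEdge cp₀ cp₁ cp₂ cm₀ cm₁ c₀ c₁ b₁ α β d
      = edgeForm (fun s => d.1 * cp₀ s + d.2.1 * cp₁ s + d.2.2.1 * cp₂ s)
          (fun s => β s * (d.1 * deriv cp₀ s + d.2.1 * deriv cp₁ s + d.2.2.1 * deriv cp₂ s))
          (fun s => α s * (d.2.2.2.1 * cm₀ s + d.2.2.2.2 * cm₁ s)) c₀ c₁ b₁ := by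
  funext ξ
  simp only [fEdge, edgeForm]
  ring

theorem edgeData_fEdge (hcp₀ : Differentiable ℝ cp₀) (hcp₁ : Differentiable ℝ cp₁)
    (hcp₂ : Differentiable ℝ cp₂) (hcp₀' : DifferentiableAt ℝ (deriv cp₀) 0)
    (hcp₁' : DifferentiableAt ℝ (deriv cp₁) 0) (hcp₂' : DifferentiableAt ℝ (deriv cp₂) 0)
    (hcp₀0 : cp₀ 0 = 1) (hcp₀1 : deriv cp₀ 0 = 0) (hcp₀2 : deriv (deriv cp₀) 0 = 0)
    (hcp₁0 : cp₁ 0 = 0) (hcp₁1 : deriv cp₁ 0 = 1) (hcp₁2 : deriv (deriv cp₁) 0 = 0)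
    (hcp₂0 : cp₂ 0 = 0) (hcp₂1 : deriv cp₂ 0 = 0) (hcp₂2 : deriv (deriv cp₂) 0 = 1)
    (hcm₀ : DifferentiableAt ℝ cm₀ 0) (hcm₁ : DifferentiableAt ℝ cm₁ 0)
    (hcm₀0 : cm₀ 0 = 1) (hcm₀1 : deriv cm₀ 0 = 0) (hcm₁0 : cm₁ 0 = 0) (hcm₁1 : deriv cm₁ 0 = 1)
    (hc₀ : DifferentiableAt ℝ c₀ 0) (hc₁ : DifferentiableAt ℝ c₁ 0)
    (hb₁ : DifferentiableAt ℝ b₁ 0) (hc₀0 : c₀ 0 = 1) (hc₀1 : deriv c₀ 0 = 0)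
    (hc₁0 : c₁ 0 = 0) (hc₁1 : deriv c₁ 0 = 1) (hb₁0 : b₁ 0 = 0)
    (hα : DifferentiableAt ℝ α 0) (hβ : DifferentiableAt ℝ β 0) (d : ℝ × ℝ × ℝ × ℝ × ℝ) :
    edgeData (fEdge cp₀ cp₁ cp₂ cm₀ cm₁ c₀ c₁ b₁ α β d)
      = edgeCoeffMap (deriv b₁ 0 * α 0) (β 0) (deriv b₁ 0 * deriv α 0) (deriv β 0) d := by
  have hP : ∀ x, HasDerivAt (fun s => d.1 * cp₀ s + d.2.1 * cp₁ s + d.2.2.1 * cp₂ s)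
      (d.1 * deriv cp₀ x + d.2.1 * deriv cp₁ x + d.2.2.1 * deriv cp₂ x) x :=
    fun x => hasDerivAt_linComb₃ _ _ _ (hcp₀ x) (hcp₁ x) (hcp₂ x)
  have hP' := hasDerivAt_linComb₃ d.1 d.2.1 d.2.2.1 hcp₀' hcp₁' hcp₂'
  have hQ := hβ.hasDerivAt.fun_mul hP'
  have hR := hα.hasDerivAt.fun_mul
    ((hcm₀.hasDerivAt.const_mul d.2.2.2.1).fun_add (hcm₁.hasDerivAt.const_mul d.2.2.2.2))
  rw [fEdge_eq_edgeForm, edgeData_edgeForm (hP 0).differentiableAt hQ.differentiableAt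
    hR.differentiableAt hc₀ hc₁ hb₁ hc₀0 hc₀1 hc₁0 hc₁1 hb₁0, (hP 0).deriv,
    funext fun x => (hP x).deriv, hP'.deriv, hQ.deriv, hR.deriv]
  simp only [edgeCoeffMap, hcp₀0, hcp₀1, hcp₀2, hcp₁0, hcp₁1, hcp₁2, hcp₂0, hcp₂1, hcp₂2,
    hcm₀0, hcm₀1, hcm₁0, hcm₁1, Prod.mk.injEq]
  exact ⟨by ring, by ring, by ring, by ring, by ring⟩

end fEdge

/-- In the edge-form setting, the derivatives of `f_d` at `(0,0)` are given by the
stated explicit formulas in `d`, and consequently every prescribed vector of Hermite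
data at `(0,0)` is attained by a unique `d ∈ ℝ⁵`. -/
theorem stmt12 (cp₀ cp₁ cp₂ cm₀ cm₁ c₀ c₁ b₁ α β : ℝ → ℝ)
    (hcp₀ : ContDiff ℝ 2 cp₀) (hcp₁ : ContDiff ℝ 2 cp₁) (hcp₂ : ContDiff ℝ 2 cp₂)
    (hcp₀0 : cp₀ 0 = 1) (hcp₀1 : deriv cp₀ 0 = 0) (hcp₀2 : deriv (deriv cp₀) 0 = 0)
    (hcp₁0 : cp₁ 0 = 0) (hcp₁1 : deriv cp₁ 0 = 1) (hcp₁2 : deriv (deriv cp₁) 0 = 0)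
    (hcp₂0 : cp₂ 0 = 0) (hcp₂1 : deriv cp₂ 0 = 0) (hcp₂2 : deriv (deriv cp₂) 0 = 1)
    (hcm₀ : ContDiff ℝ 1 cm₀) (hcm₁ : ContDiff ℝ 1 cm₁)
    (hcm₀0 : cm₀ 0 = 1) (hcm₀1 : deriv cm₀ 0 = 0)
    (hcm₁0 : cm₁ 0 = 0) (hcm₁1 : deriv cm₁ 0 = 1)
    (hc₀ : ContDiff ℝ 1 c₀) (hc₁ : ContDiff ℝ 1 c₁) (hb₁ : ContDiff ℝ 1 b₁)
    (hc₀0 : c₀ 0 = 1) (hc₀1 : deriv c₀ 0 = 0)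
    (hc₁0 : c₁ 0 = 0) (hc₁1 : deriv c₁ 0 = 1)
    (lam : ℝ) (hlam : lam ≠ 0) (hb₁0 : b₁ 0 = 0) (hb₁1 : deriv b₁ 0 = lam)
    (hα : ContDiff ℝ 1 α) (hβ : ContDiff ℝ 1 β) (hα0 : α 0 ≠ 0) :
    (∀ d : ℝ × ℝ × ℝ × ℝ × ℝ,
      fEdge cp₀ cp₁ cp₂ cm₀ cm₁ c₀ c₁ b₁ α β d (0, 0) = d.1 ∧
      pd2 (fEdge cp₀ cp₁ cp₂ cm₀ cm₁ c₀ c₁ b₁ α β d) (0, 0) = d.2.1 ∧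
      pd2 (pd2 (fEdge cp₀ cp₁ cp₂ cm₀ cm₁ c₀ c₁ b₁ α β d)) (0, 0) = d.2.2.1 ∧
      pd1 (fEdge cp₀ cp₁ cp₂ cm₀ cm₁ c₀ c₁ b₁ α β d) (0, 0)
        = lam * α 0 * d.2.2.2.1 - β 0 * d.2.1 ∧
      pd1 (pd2 (fEdge cp₀ cp₁ cp₂ cm₀ cm₁ c₀ c₁ b₁ α β d)) (0, 0)
        = lam * α 0 * d.2.2.2.2 - β 0 * d.2.2.1
          + lam * deriv α 0 * d.2.2.2.1 - deriv β 0 * d.2.1) ∧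
    (∀ w : ℝ × ℝ × ℝ × ℝ × ℝ,
      ∃! d : ℝ × ℝ × ℝ × ℝ × ℝ,
        edgeData (fEdge cp₀ cp₁ cp₂ cm₀ cm₁ c₀ c₁ b₁ α β d) = w) := by
  have hdiff {f : ℝ → ℝ} (hf : ContDiff ℝ 1 f) : DifferentiableAt ℝ f 0 :=
    hf.differentiable one_ne_zero 0
  have hdata := edgeData_fEdge (hcp₀.differentiable two_ne_zero)
    (hcp₁.differentiable two_ne_zero) (hcp₂.differentiable two_ne_zero)
    (hcp₀.differentiable_deriv_two 0) (hcp₁.differentiable_deriv_two 0)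
    (hcp₂.differentiable_deriv_two 0) hcp₀0 hcp₀1 hcp₀2 hcp₁0 hcp₁1 hcp₁2 hcp₂0 hcp₂1 hcp₂2
    (hdiff hcm₀) (hdiff hcm₁) hcm₀0 hcm₀1 hcm₁0 hcm₁1 (hdiff hc₀) (hdiff hc₁) (hdiff hb₁)
    hc₀0 hc₀1 hc₁0 hc₁1 hb₁0 (hdiff hα) (hdiff hβ)
  rw [hb₁1] at hdata
  refine ⟨fun d => ?_, fun w => ?_⟩
  · simpa only [edgeData, edgeCoeffMap, Prod.mk.injEq] using hdata d
  · simpa only [hdata] using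
      (edgeCoeffMap_bijective (mul_ne_zero hlam hα0) _ _ _).existsUnique w
end

section
/- In the edge-form setting, let additionally t, 𝐝 : [0,1] → ℝ² be differentiable, φ₀ ∈ ℝ, g ∈ ℝ² and H a symmetric real 2×2 matrix, and define d₀₀ = φ₀, d₀₁ = ⟨g, t(0)⟩, d₀₂ = t(0)ᵀ H t(0) + ⟨g, t′(0)⟩, d₁₀ = (1/λ)⟨g, 𝐝(0)⟩, d₁₁ = (1/λ)(t(0)ᵀ H 𝐝(0) + ⟨g, 𝐝′(0)⟩). Then the function f_d satisfies: f_d(0,0) = φ₀, ∂₂f_d(0,0) = ⟨g, t(0)⟩, ∂₂²f_d(0,0) = t(0)ᵀ H t(0) + ⟨g, t′(0)⟩, ∂₁f_d(0,0) = ⟨g, α(0)𝐝(0) − β(0)t(0)⟩, and ∂₁∂₂f_d(0,0) = t(0)ᵀ H (α(0)𝐝(0) − β(0)t(0)) + ⟨g, (α𝐝)′(0) − (βt)′(0)⟩. -/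
/-- The bilinear form `aᵀ H b` on `ℝ²` given by a 2×2 matrix `H`. -/
def qf (H : Matrix (Fin 2) (Fin 2) ℝ) (a b : ℝ × ℝ) : ℝ :=
  a.1 * (H 0 0 * b.1 + H 0 1 * b.2) + a.2 * (H 1 0 * b.1 + H 1 1 * b.2)

noncomputable def sepSum {ι : Type*} [Fintype ι] (u v : ι → ℝ → ℝ) : ℝ × ℝ → ℝ :=
  fun ξ => ∑ i, u i ξ.2 * v i ξ.1

section SepSum

variable {ι : Type*} [Fintype ι] (u v : ι → ℝ → ℝ)

theorem pd1_sepSum {x s : ℝ} (hv : ∀ i, DifferentiableAt ℝ (v i) x) :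
    pd1 (sepSum u v) (x, s) = ∑ i, u i s * deriv (v i) x :=
  (HasDerivAt.fun_sum fun i _ => ((hv i).hasDerivAt.const_mul (u i s))).deriv

theorem pd2_sepSum (hu : ∀ i, Differentiable ℝ (u i)) :
    pd2 (sepSum u v) = sepSum (fun i => deriv (u i)) v :=
  funext fun x => (HasDerivAt.fun_sum fun i _ => ((hu i x.2).hasDerivAt.mul_const (v i x.1))).deriv

end SepSum

theorem sepSum_hermite_data {A B C c₀ c₁ b : ℝ → ℝ} {lam : ℝ}
    (hA : Differentiable ℝ A) (hB : Differentiable ℝ B) (hC : Differentiable ℝ C)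
    (hc₀ : DifferentiableAt ℝ c₀ 0) (hc₁ : DifferentiableAt ℝ c₁ 0)
    (hb : DifferentiableAt ℝ b 0)
    (hc₀0 : c₀ 0 = 1) (hc₀1 : deriv c₀ 0 = 0) (hc₁0 : c₁ 0 = 0) (hc₁1 : deriv c₁ 0 = 1)
    (hb0 : b 0 = 0) (hb1 : deriv b 0 = lam) :
    sepSum ![A, B, C] ![c₀, c₁, b] (0, 0) = A 0 ∧
    pd2 (sepSum ![A, B, C] ![c₀, c₁, b]) (0, 0) = deriv A 0 ∧
    pd2 (pd2 (sepSum ![A, B, C] ![c₀, c₁, b])) (0, 0) = deriv (deriv A) 0 ∧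
    pd1 (sepSum ![A, B, C] ![c₀, c₁, b]) (0, 0) = B 0 + lam * C 0 ∧
    pd1 (pd2 (sepSum ![A, B, C] ![c₀, c₁, b])) (0, 0) = deriv B 0 + lam * deriv C 0 := by
  have hu : ∀ i, Differentiable ℝ (![A, B, C] i) := by
    intro i; fin_cases i <;> assumption
  have hv : ∀ i, DifferentiableAt ℝ (![c₀, c₁, b] i) 0 := by
    intro i; fin_cases i <;> assumption
  have hslice : (fun s => pd2 (sepSum ![A, B, C] ![c₀, c₁, b]) (0, s)) = deriv A := by
    funext s
    simp [pd2_sepSum _ _ hu, sepSum, Fin.sum_univ_three, hc₀0, hc₁0, hb0]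
  refine ⟨?_, congrFun hslice 0, ?_, ?_, ?_⟩
  · simp [sepSum, Fin.sum_univ_three, hc₀0, hc₁0, hb0]
  · exact congrArg (deriv · 0) hslice
  · simp [pd1_sepSum _ _ hv, Fin.sum_univ_three, hc₀1, hc₁1, hb1, mul_comm]
  · simp [pd2_sepSum _ _ hu, pd1_sepSum _ _ hv, Fin.sum_univ_three, hc₀1, hc₁1, hb1, mul_comm]

theorem fEdge_eq_sepSum (cp₀ cp₁ cp₂ cm₀ cm₁ c₀ c₁ b₁ α β : ℝ → ℝ)
    (d00 d01 d02 d10 d11 : ℝ) :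
    fEdge cp₀ cp₁ cp₂ cm₀ cm₁ c₀ c₁ b₁ α β (d00, d01, d02, d10, d11) = sepSum
      ![fun s => d00 * cp₀ s + d01 * cp₁ s + d02 * cp₂ s,
        fun s => -(β s * (d00 * deriv cp₀ s + d01 * deriv cp₁ s + d02 * deriv cp₂ s)),
        fun s => α s * (d10 * cm₀ s + d11 * cm₁ s)] ![c₀, c₁, b₁] := by
  funext ξ
  simp only [fEdge, sepSum, Fin.sum_univ_three, Matrix.cons_val_zero, Matrix.cons_val_one,
    Matrix.cons_val_two, Matrix.tail_cons, Matrix.head_cons]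
  ring

theorem fEdge_hermite_data {cp₀ cp₁ cp₂ cm₀ cm₁ c₀ c₁ b₁ α β : ℝ → ℝ} {lam : ℝ}
    (hcp₀ : Differentiable ℝ cp₀) (hcp₁ : Differentiable ℝ cp₁) (hcp₂ : Differentiable ℝ cp₂)
    (hcp₀' : Differentiable ℝ (deriv cp₀)) (hcp₁' : Differentiable ℝ (deriv cp₁))
    (hcp₂' : Differentiable ℝ (deriv cp₂))
    (hcp₀0 : cp₀ 0 = 1) (hcp₀1 : deriv cp₀ 0 = 0) (hcp₀2 : deriv (deriv cp₀) 0 = 0)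
    (hcp₁0 : cp₁ 0 = 0) (hcp₁1 : deriv cp₁ 0 = 1) (hcp₁2 : deriv (deriv cp₁) 0 = 0)
    (hcp₂0 : cp₂ 0 = 0) (hcp₂1 : deriv cp₂ 0 = 0) (hcp₂2 : deriv (deriv cp₂) 0 = 1)
    (hcm₀ : Differentiable ℝ cm₀) (hcm₁ : Differentiable ℝ cm₁)
    (hcm₀0 : cm₀ 0 = 1) (hcm₀1 : deriv cm₀ 0 = 0) (hcm₁0 : cm₁ 0 = 0) (hcm₁1 : deriv cm₁ 0 = 1)
    (hc₀ : DifferentiableAt ℝ c₀ 0) (hc₁ : DifferentiableAt ℝ c₁ 0)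
    (hb₁ : DifferentiableAt ℝ b₁ 0)
    (hc₀0 : c₀ 0 = 1) (hc₀1 : deriv c₀ 0 = 0) (hc₁0 : c₁ 0 = 0) (hc₁1 : deriv c₁ 0 = 1)
    (hb₁0 : b₁ 0 = 0) (hb₁1 : deriv b₁ 0 = lam)
    (hα : Differentiable ℝ α) (hβ : Differentiable ℝ β) (d00 d01 d02 d10 d11 : ℝ) :
    fEdge cp₀ cp₁ cp₂ cm₀ cm₁ c₀ c₁ b₁ α β (d00, d01, d02, d10, d11) (0, 0) = d00 ∧
    pd2 (fEdge cp₀ cp₁ cp₂ cm₀ cm₁ c₀ c₁ b₁ α β (d00, d01, d02, d10, d11)) (0, 0) = d01 ∧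
    pd2 (pd2 (fEdge cp₀ cp₁ cp₂ cm₀ cm₁ c₀ c₁ b₁ α β (d00, d01, d02, d10, d11))) (0, 0) = d02 ∧
    pd1 (fEdge cp₀ cp₁ cp₂ cm₀ cm₁ c₀ c₁ b₁ α β (d00, d01, d02, d10, d11)) (0, 0)
      = -(β 0 * d01) + lam * (α 0 * d10) ∧
    pd1 (pd2 (fEdge cp₀ cp₁ cp₂ cm₀ cm₁ c₀ c₁ b₁ α β (d00, d01, d02, d10, d11))) (0, 0)
      = -(deriv β 0 * d01 + β 0 * d02) + lam * (deriv α 0 * d10 + α 0 * d11) := by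
  have hA' : deriv (fun s => d00 * cp₀ s + d01 * cp₁ s + d02 * cp₂ s)
      = fun s => d00 * deriv cp₀ s + d01 * deriv cp₁ s + d02 * deriv cp₂ s := by
    funext s
    simp (disch := fun_prop) only [deriv_fun_add, deriv_const_mul_field]
  obtain ⟨h₀, h₂, h₂₂, h₁, h₁₂⟩ := sepSum_hermite_data
    (A := fun s => d00 * cp₀ s + d01 * cp₁ s + d02 * cp₂ s)
    (B := fun s => -(β s * (d00 * deriv cp₀ s + d01 * deriv cp₁ s + d02 * deriv cp₂ s)))
    (C := fun s => α s * (d10 * cm₀ s + d11 * cm₁ s))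
    (by fun_prop) (by fun_prop) (by fun_prop) hc₀ hc₁ hb₁ hc₀0 hc₀1 hc₁0 hc₁1 hb₁0 hb₁1
  rw [fEdge_eq_sepSum]
  refine ⟨?_, ?_, ?_, ?_, ?_⟩
  · simp [h₀, hcp₀0, hcp₁0, hcp₂0]
  · simp [h₂, hA', hcp₀1, hcp₁1, hcp₂1]
  · rw [h₂₂, hA']
    simp (disch := fun_prop) [deriv_fun_add, hcp₀2, hcp₁2, hcp₂2]
  · simp [h₁, hcp₀1, hcp₁1, hcp₂1, hcm₀0, hcm₁0]
  · rw [h₁₂]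
    simp (disch := fun_prop) [deriv_fun_mul, deriv_fun_add, hcp₀1, hcp₁1, hcp₂1, hcp₀2, hcp₁2,
      hcp₂2, hcm₀0, hcm₁0, hcm₀1, hcm₁1]

theorem stmt13_general (cp₀ cp₁ cp₂ cm₀ cm₁ c₀ c₁ b₁ α β : ℝ → ℝ)
    (hcp₀ : ContDiff ℝ 2 cp₀) (hcp₁ : ContDiff ℝ 2 cp₁) (hcp₂ : ContDiff ℝ 2 cp₂)
    (hcp₀0 : cp₀ 0 = 1) (hcp₀1 : deriv cp₀ 0 = 0) (hcp₀2 : deriv (deriv cp₀) 0 = 0)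
    (hcp₁0 : cp₁ 0 = 0) (hcp₁1 : deriv cp₁ 0 = 1) (hcp₁2 : deriv (deriv cp₁) 0 = 0)
    (hcp₂0 : cp₂ 0 = 0) (hcp₂1 : deriv cp₂ 0 = 0) (hcp₂2 : deriv (deriv cp₂) 0 = 1)
    (hcm₀ : ContDiff ℝ 1 cm₀) (hcm₁ : ContDiff ℝ 1 cm₁)
    (hcm₀0 : cm₀ 0 = 1) (hcm₀1 : deriv cm₀ 0 = 0)
    (hcm₁0 : cm₁ 0 = 0) (hcm₁1 : deriv cm₁ 0 = 1)
    (hc₀ : ContDiff ℝ 1 c₀) (hc₁ : ContDiff ℝ 1 c₁) (hb₁ : ContDiff ℝ 1 b₁)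
    (hc₀0 : c₀ 0 = 1) (hc₀1 : deriv c₀ 0 = 0)
    (hc₁0 : c₁ 0 = 0) (hc₁1 : deriv c₁ 0 = 1)
    (lam : ℝ) (hlam : lam ≠ 0) (hb₁0 : b₁ 0 = 0) (hb₁1 : deriv b₁ 0 = lam)
    (hα : ContDiff ℝ 1 α) (hβ : ContDiff ℝ 1 β)
    (tv dv : ℝ → ℝ × ℝ) (htv : Differentiable ℝ tv) (hdv : Differentiable ℝ dv)
    (φ₀ : ℝ) (g : ℝ × ℝ) (H : Matrix (Fin 2) (Fin 2) ℝ)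
    (d : ℝ × ℝ × ℝ × ℝ × ℝ)
    (hd : d = (φ₀, dot2 g (tv 0), qf H (tv 0) (tv 0) + dot2 g (deriv tv 0),
      (1 / lam) * dot2 g (dv 0),
      (1 / lam) * (qf H (tv 0) (dv 0) + dot2 g (deriv dv 0)))) :
    fEdge cp₀ cp₁ cp₂ cm₀ cm₁ c₀ c₁ b₁ α β d (0, 0) = φ₀ ∧
    pd2 (fEdge cp₀ cp₁ cp₂ cm₀ cm₁ c₀ c₁ b₁ α β d) (0, 0) = dot2 g (tv 0) ∧
    pd2 (pd2 (fEdge cp₀ cp₁ cp₂ cm₀ cm₁ c₀ c₁ b₁ α β d)) (0, 0)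
      = qf H (tv 0) (tv 0) + dot2 g (deriv tv 0) ∧
    pd1 (fEdge cp₀ cp₁ cp₂ cm₀ cm₁ c₀ c₁ b₁ α β d) (0, 0)
      = dot2 g (α 0 • dv 0 - β 0 • tv 0) ∧
    pd1 (pd2 (fEdge cp₀ cp₁ cp₂ cm₀ cm₁ c₀ c₁ b₁ α β d)) (0, 0)
      = qf H (tv 0) (α 0 • dv 0 - β 0 • tv 0)
        + dot2 g (deriv (fun ξ => α ξ • dv ξ) 0 - deriv (fun ξ => β ξ • tv ξ) 0) := by
  subst hd
  have hα' := hα.differentiable one_ne_zero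
  have hβ' := hβ.differentiable one_ne_zero
  obtain ⟨h₀, h₂, h₂₂, h₁, h₁₂⟩ := fEdge_hermite_data
    (hcp₀.differentiable two_ne_zero) (hcp₁.differentiable two_ne_zero)
    (hcp₂.differentiable two_ne_zero) hcp₀.differentiable_deriv_two
    hcp₁.differentiable_deriv_two hcp₂.differentiable_deriv_two
    hcp₀0 hcp₀1 hcp₀2 hcp₁0 hcp₁1 hcp₁2 hcp₂0 hcp₂1 hcp₂2
    (hcm₀.differentiable one_ne_zero) (hcm₁.differentiable one_ne_zero)
    hcm₀0 hcm₀1 hcm₁0 hcm₁1 (hc₀.differentiable one_ne_zero 0)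
    (hc₁.differentiable one_ne_zero 0) (hb₁.differentiable one_ne_zero 0)
    hc₀0 hc₀1 hc₁0 hc₁1 hb₁0 hb₁1 hα' hβ' φ₀ (dot2 g (tv 0))
    (qf H (tv 0) (tv 0) + dot2 g (deriv tv 0)) ((1 / lam) * dot2 g (dv 0))
    ((1 / lam) * (qf H (tv 0) (dv 0) + dot2 g (deriv dv 0)))
  have hαd : deriv (fun ξ => α ξ • dv ξ) 0 = α 0 • deriv dv 0 + deriv α 0 • dv 0 :=
    ((hα' 0).hasDerivAt.smul (hdv 0).hasDerivAt).deriv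
  have hβt : deriv (fun ξ => β ξ • tv ξ) 0 = β 0 • deriv tv 0 + deriv β 0 • tv 0 :=
    ((hβ' 0).hasDerivAt.smul (htv 0).hasDerivAt).deriv
  refine ⟨h₀, h₂, h₂₂, ?_, ?_⟩
  · rw [h₁]
    simp only [dot2, Prod.fst_sub, Prod.snd_sub, Prod.smul_fst, Prod.smul_snd, smul_eq_mul]
    field_simp
    ring
  · rw [h₁₂, hαd, hβt]
    simp only [dot2, qf, Prod.fst_sub, Prod.snd_sub, Prod.fst_add, Prod.snd_add,
      Prod.smul_fst, Prod.smul_snd, smul_eq_mul]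
    field_simp
    ring

/-- In the edge-form setting, with coefficients `d` built from a point value `φ₀`,
gradient `g` and symmetric Hessian `H` via the tangent `t` and transversal direction
`𝐝`, the function `f_d` attains the chain-rule Hermite data at `(0,0)`. -/
theorem stmt13 (cp₀ cp₁ cp₂ cm₀ cm₁ c₀ c₁ b₁ α β : ℝ → ℝ)
    (hcp₀ : ContDiff ℝ 2 cp₀) (hcp₁ : ContDiff ℝ 2 cp₁) (hcp₂ : ContDiff ℝ 2 cp₂)
    (hcp₀0 : cp₀ 0 = 1) (hcp₀1 : deriv cp₀ 0 = 0) (hcp₀2 : deriv (deriv cp₀) 0 = 0)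
    (hcp₁0 : cp₁ 0 = 0) (hcp₁1 : deriv cp₁ 0 = 1) (hcp₁2 : deriv (deriv cp₁) 0 = 0)
    (hcp₂0 : cp₂ 0 = 0) (hcp₂1 : deriv cp₂ 0 = 0) (hcp₂2 : deriv (deriv cp₂) 0 = 1)
    (hcm₀ : ContDiff ℝ 1 cm₀) (hcm₁ : ContDiff ℝ 1 cm₁)
    (hcm₀0 : cm₀ 0 = 1) (hcm₀1 : deriv cm₀ 0 = 0)
    (hcm₁0 : cm₁ 0 = 0) (hcm₁1 : deriv cm₁ 0 = 1)
    (hc₀ : ContDiff ℝ 1 c₀) (hc₁ : ContDiff ℝ 1 c₁) (hb₁ : ContDiff ℝ 1 b₁)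
    (hc₀0 : c₀ 0 = 1) (hc₀1 : deriv c₀ 0 = 0)
    (hc₁0 : c₁ 0 = 0) (hc₁1 : deriv c₁ 0 = 1)
    (lam : ℝ) (hlam : lam ≠ 0) (hb₁0 : b₁ 0 = 0) (hb₁1 : deriv b₁ 0 = lam)
    (hα : ContDiff ℝ 1 α) (hβ : ContDiff ℝ 1 β) (hα0 : α 0 ≠ 0)
    (tv dv : ℝ → ℝ × ℝ) (htv : Differentiable ℝ tv) (hdv : Differentiable ℝ dv)
    (φ₀ : ℝ) (g : ℝ × ℝ) (H : Matrix (Fin 2) (Fin 2) ℝ) (hH : H.IsSymm)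
    (d : ℝ × ℝ × ℝ × ℝ × ℝ)
    (hd : d = (φ₀, dot2 g (tv 0), qf H (tv 0) (tv 0) + dot2 g (deriv tv 0),
      (1 / lam) * dot2 g (dv 0),
      (1 / lam) * (qf H (tv 0) (dv 0) + dot2 g (deriv dv 0)))) :
    fEdge cp₀ cp₁ cp₂ cm₀ cm₁ c₀ c₁ b₁ α β d (0, 0) = φ₀ ∧
    pd2 (fEdge cp₀ cp₁ cp₂ cm₀ cm₁ c₀ c₁ b₁ α β d) (0, 0) = dot2 g (tv 0) ∧
    pd2 (pd2 (fEdge cp₀ cp₁ cp₂ cm₀ cm₁ c₀ c₁ b₁ α β d)) (0, 0)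
      = qf H (tv 0) (tv 0) + dot2 g (deriv tv 0) ∧
    pd1 (fEdge cp₀ cp₁ cp₂ cm₀ cm₁ c₀ c₁ b₁ α β d) (0, 0)
      = dot2 g (α 0 • dv 0 - β 0 • tv 0) ∧
    pd1 (pd2 (fEdge cp₀ cp₁ cp₂ cm₀ cm₁ c₀ c₁ b₁ α β d)) (0, 0)
      = qf H (tv 0) (α 0 • dv 0 - β 0 • tv 0)
        + dot2 g (deriv (fun ξ => α ξ • dv ξ) 0 - deriv (fun ξ => β ξ • tv ξ) 0) :=
  stmt13_general cp₀ cp₁ cp₂ cm₀ cm₁ c₀ c₁ b₁ α β hcp₀ hcp₁ hcp₂ hcp₀0 hcp₀1 hcp₀2 hcp₁0 hcp₁1 hcp₁2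
    hcp₂0 hcp₂1 hcp₂2 hcm₀ hcm₁ hcm₀0 hcm₀1 hcm₁0 hcm₁1 hc₀ hc₁ hb₁ hc₀0 hc₀1 hc₁0 hc₁1 lam hlam
    hb₁0 hb₁1 hα hβ tv dv htv hdv φ₀ g H d hd
end

section
/- In the edge-form setting, let additionally α₂, β₂ : [0,1] → ℝ be C¹, t, 𝐝 : [0,1] → ℝ² be differentiable, φ₀ ∈ ℝ, g ∈ ℝ² and H a symmetric real 2×2 matrix, and define d₀₀ = φ₀, d₀₁ = ⟨g, t(0)⟩, d₀₂ = t(0)ᵀ H t(0) + ⟨g, t′(0)⟩, d₁₀ = (1/λ)⟨g, 𝐝(0)⟩, d₁₁ = (1/λ)(t(0)ᵀ H 𝐝(0) + ⟨g, 𝐝′(0)⟩). Define f̃(ξ₁,ξ₂) = Σ_{j=0}^{2} d₀ⱼ (c_j⁺(ξ₁)c₀(ξ₂) − β₂(ξ₁)(c_j⁺)′(ξ₁)c₁(ξ₂)) − Σ_{j=0}^{1} d₁ⱼ α₂(ξ₁)c_j⁻(ξ₁)b₁(ξ₂). Then: f̃(0,0) = φ₀, ∂₁f̃(0,0) = ⟨g,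 t(0)⟩, ∂₁²f̃(0,0) = t(0)ᵀ H t(0) + ⟨g, t′(0)⟩, ∂₂f̃(0,0) = ⟨g, −α₂(0)𝐝(0) − β₂(0)t(0)⟩, and ∂₁∂₂f̃(0,0) = t(0)ᵀ H (−α₂(0)𝐝(0) − β₂(0)t(0)) + ⟨g, −(α₂𝐝)′(0) − (β₂t)′(0)⟩. -/
/-- The vertex-edge function `f̃` pulled back to the second adjacent patch, with
coefficients `d = (d₀₀, d₀₁, d₀₂, d₁₀, d₁₁)` and gluing data `α₂, β₂`. -/
noncomputable def fEdgeSwap (cp₀ cp₁ cp₂ cm₀ cm₁ c₀ c₁ b₁ α₂ β₂ : ℝ → ℝ)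
    (d : ℝ × ℝ × ℝ × ℝ × ℝ) : ℝ × ℝ → ℝ := fun ξ =>
  d.1 * (cp₀ ξ.1 * c₀ ξ.2 - β₂ ξ.1 * deriv cp₀ ξ.1 * c₁ ξ.2)
  + d.2.1 * (cp₁ ξ.1 * c₀ ξ.2 - β₂ ξ.1 * deriv cp₁ ξ.1 * c₁ ξ.2)
  + d.2.2.1 * (cp₂ ξ.1 * c₀ ξ.2 - β₂ ξ.1 * deriv cp₂ ξ.1 * c₁ ξ.2)
  - d.2.2.2.1 * (α₂ ξ.1 * cm₀ ξ.1 * b₁ ξ.2)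
  - d.2.2.2.2 * (α₂ ξ.1 * cm₁ ξ.1 * b₁ ξ.2)

/-! In `ξ₂` the function `f̃` is a combination of `c₀, c₁, b₁`, whose value and slope at `0` are
`(1, 0)`, `(0, 1)` and `(0, λ)`. Hence its trace on `ξ₂ = 0` is `a = Σ d₀ⱼ c_j⁺` and its normal
derivative there is `-β₂ a' - λ α₂ (d₁₀ c₀⁻ + d₁₁ c₁⁻)`, so by the cardinal Hermite conditions on
`c_j^±` all five vertex quantities are explicit linear expressions in `d`. Substituting the chosen
`d`, the factor `1/λ` cancels `b₁'(0) = λ`, and bilinearity of `⟨·,·⟩` and `(·)ᵀH(·)` together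
with the product rule for `α₂ 𝐝` and `β₂ t` gives the chain-rule data of `φ ∘ F`. -/

section PartialDerivatives

variable {E : Type*} [NormedAddCommGroup E] [NormedSpace ℝ E]

theorem pd1_eq_deriv_of_forall {f : ℝ × ℝ → E} {a : ℝ → E} {y : ℝ}
    (h : ∀ s, f (s, y) = a s) (x : ℝ) : pd1 f (x, y) = deriv a x := by
  simp only [pd1, h]

theorem pd2_eq_deriv_of_forall {f : ℝ × ℝ → E} {b : ℝ → E} {x : ℝ}
    (h : ∀ u, f (x, u) = b u) (y : ℝ) : pd2 f (x, y) = deriv b y := by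
  simp only [pd2, h]

end PartialDerivatives

section Separable

variable {f : ℝ × ℝ → ℝ} {a b e c₀ c₁ b₁ : ℝ → ℝ}

theorem pd2_eq_of_separable
    (hf : ∀ ξ, f ξ = a ξ.1 * c₀ ξ.2 - b ξ.1 * c₁ ξ.2 - e ξ.1 * b₁ ξ.2) {y : ℝ}
    (hc₀ : DifferentiableAt ℝ c₀ y) (hc₁ : DifferentiableAt ℝ c₁ y)
    (hb₁ : DifferentiableAt ℝ b₁ y) (x : ℝ) :
    pd2 f (x, y) = a x * deriv c₀ y - b x * deriv c₁ y - e x * deriv b₁ y :=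
  (pd2_eq_deriv_of_forall (fun u => hf (x, u)) y).trans
    (((hc₀.hasDerivAt.const_mul (a x)).sub (hc₁.hasDerivAt.const_mul (b x))).sub
      (hb₁.hasDerivAt.const_mul (e x))).deriv

theorem vertex_data_of_separable
    (hf : ∀ ξ, f ξ = a ξ.1 * c₀ ξ.2 - b ξ.1 * c₁ ξ.2 - e ξ.1 * b₁ ξ.2)
    (hc₀ : DifferentiableAt ℝ c₀ 0) (hc₁ : DifferentiableAt ℝ c₁ 0)
    (hb₁ : DifferentiableAt ℝ b₁ 0) (hc₀0 : c₀ 0 = 1) (hc₀1 : deriv c₀ 0 = 0)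
    (hc₁0 : c₁ 0 = 0) (hc₁1 : deriv c₁ 0 = 1) {lam : ℝ} (hb₁0 : b₁ 0 = 0)
    (hb₁1 : deriv b₁ 0 = lam) :
    f (0, 0) = a 0 ∧ pd1 f (0, 0) = deriv a 0 ∧ pd1 (pd1 f) (0, 0) = deriv (deriv a) 0 ∧
      pd2 f (0, 0) = -b 0 - lam * e 0 ∧
      pd1 (pd2 f) (0, 0) = deriv (fun s => -b s - lam * e s) 0 := by
  have htrace : ∀ s, f (s, 0) = a s := fun s => by simp [hf, hc₀0, hc₁0, hb₁0]
  have hnormal : ∀ s, pd2 f (s, 0) = -b s - lam * e s := fun s => by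
    rw [pd2_eq_of_separable hf hc₀ hc₁ hb₁, hc₀1, hc₁1, hb₁1]
    ring
  exact ⟨htrace 0, pd1_eq_deriv_of_forall htrace 0,
    pd1_eq_deriv_of_forall (pd1_eq_deriv_of_forall htrace) 0, hnormal 0,
    pd1_eq_deriv_of_forall hnormal 0⟩

end Separable

section EdgeSwap

variable {cp₀ cp₁ cp₂ cm₀ cm₁ c₀ c₁ b₁ α₂ β₂ : ℝ → ℝ}

theorem fEdgeSwap_vertex_data (hcp₀ : Differentiable ℝ cp₀) (hcp₁ : Differentiable ℝ cp₁)
    (hcp₂ : Differentiable ℝ cp₂) (hdcp₀ : DifferentiableAt ℝ (deriv cp₀) 0)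
    (hdcp₁ : DifferentiableAt ℝ (deriv cp₁) 0) (hdcp₂ : DifferentiableAt ℝ (deriv cp₂) 0)
    (hcp₀0 : cp₀ 0 = 1) (hcp₀1 : deriv cp₀ 0 = 0) (hcp₀2 : deriv (deriv cp₀) 0 = 0)
    (hcp₁0 : cp₁ 0 = 0) (hcp₁1 : deriv cp₁ 0 = 1) (hcp₁2 : deriv (deriv cp₁) 0 = 0)
    (hcp₂0 : cp₂ 0 = 0) (hcp₂1 : deriv cp₂ 0 = 0) (hcp₂2 : deriv (deriv cp₂) 0 = 1)
    (hcm₀ : DifferentiableAt ℝ cm₀ 0) (hcm₁ : DifferentiableAt ℝ cm₁ 0)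
    (hcm₀0 : cm₀ 0 = 1) (hcm₀1 : deriv cm₀ 0 = 0) (hcm₁0 : cm₁ 0 = 0) (hcm₁1 : deriv cm₁ 0 = 1)
    (hc₀ : DifferentiableAt ℝ c₀ 0) (hc₁ : DifferentiableAt ℝ c₁ 0)
    (hb₁ : DifferentiableAt ℝ b₁ 0) (hc₀0 : c₀ 0 = 1) (hc₀1 : deriv c₀ 0 = 0)
    (hc₁0 : c₁ 0 = 0) (hc₁1 : deriv c₁ 0 = 1) {lam : ℝ} (hb₁0 : b₁ 0 = 0)
    (hb₁1 : deriv b₁ 0 = lam) (hα₂ : DifferentiableAt ℝ α₂ 0)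
    (hβ₂ : DifferentiableAt ℝ β₂ 0) (d₀₀ d₀₁ d₀₂ d₁₀ d₁₁ : ℝ) :
    let f := fEdgeSwap cp₀ cp₁ cp₂ cm₀ cm₁ c₀ c₁ b₁ α₂ β₂ (d₀₀, d₀₁, d₀₂, d₁₀, d₁₁)
    f (0, 0) = d₀₀ ∧ pd1 f (0, 0) = d₀₁ ∧ pd1 (pd1 f) (0, 0) = d₀₂ ∧
      pd2 f (0, 0) = -(β₂ 0 * d₀₁) - lam * (α₂ 0 * d₁₀) ∧
      pd1 (pd2 f) (0, 0) = -(deriv β₂ 0 * d₀₁ + β₂ 0 * d₀₂)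
        - lam * (deriv α₂ 0 * d₁₀ + α₂ 0 * d₁₁) := by
  intro f
  set a := fun s => d₀₀ * cp₀ s + d₀₁ * cp₁ s + d₀₂ * cp₂ s
  set a' := fun s => d₀₀ * deriv cp₀ s + d₀₁ * deriv cp₁ s + d₀₂ * deriv cp₂ s
  set m := fun s => d₁₀ * cm₀ s + d₁₁ * cm₁ s
  have ha : deriv a = a' := funext fun s =>
    ((((hcp₀ s).hasDerivAt.const_mul d₀₀).add ((hcp₁ s).hasDerivAt.const_mul d₀₁)).add
      ((hcp₂ s).hasDerivAt.const_mul d₀₂)).deriv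
  have ha' : HasDerivAt a'
      (d₀₀ * deriv (deriv cp₀) 0 + d₀₁ * deriv (deriv cp₁) 0 + d₀₂ * deriv (deriv cp₂) 0) 0 :=
    ((hdcp₀.hasDerivAt.const_mul d₀₀).add (hdcp₁.hasDerivAt.const_mul d₀₁)).add
      (hdcp₂.hasDerivAt.const_mul d₀₂)
  have hm : HasDerivAt m (d₁₀ * deriv cm₀ 0 + d₁₁ * deriv cm₁ 0) 0 :=
    (hcm₀.hasDerivAt.const_mul d₁₀).add (hcm₁.hasDerivAt.const_mul d₁₁)
  have hnormal := (hβ₂.hasDerivAt.mul ha').neg.sub ((hα₂.hasDerivAt.mul hm).const_mul lam)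
  obtain ⟨h0, h1, h2, h3, h4⟩ := vertex_data_of_separable (f := f) (a := a)
    (b := fun s => β₂ s * a' s) (e := fun s => α₂ s * m s)
    (fun ξ => by simp only [f, a, a', m, fEdgeSwap]; ring)
    hc₀ hc₁ hb₁ hc₀0 hc₀1 hc₁0 hc₁1 hb₁0 hb₁1
  rw [h0, h1, h2, h3, h4, ha, ha'.deriv]
  refine ⟨?_, ?_, ?_, ?_, hnormal.deriv.trans ?_⟩ <;>
    simp [a, a', m, hcp₀0, hcp₁0, hcp₂0, hcp₀1, hcp₁1, hcp₂1, hcp₀2, hcp₁2, hcp₂2,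
      hcm₀0, hcm₁0, hcm₀1, hcm₁1]

end EdgeSwap

theorem stmt14_general (cp₀ cp₁ cp₂ cm₀ cm₁ c₀ c₁ b₁ : ℝ → ℝ)
    (hcp₀ : ContDiff ℝ 2 cp₀) (hcp₁ : ContDiff ℝ 2 cp₁) (hcp₂ : ContDiff ℝ 2 cp₂)
    (hcp₀0 : cp₀ 0 = 1) (hcp₀1 : deriv cp₀ 0 = 0) (hcp₀2 : deriv (deriv cp₀) 0 = 0)
    (hcp₁0 : cp₁ 0 = 0) (hcp₁1 : deriv cp₁ 0 = 1) (hcp₁2 : deriv (deriv cp₁) 0 = 0)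
    (hcp₂0 : cp₂ 0 = 0) (hcp₂1 : deriv cp₂ 0 = 0) (hcp₂2 : deriv (deriv cp₂) 0 = 1)
    (hcm₀ : ContDiff ℝ 1 cm₀) (hcm₁ : ContDiff ℝ 1 cm₁)
    (hcm₀0 : cm₀ 0 = 1) (hcm₀1 : deriv cm₀ 0 = 0)
    (hcm₁0 : cm₁ 0 = 0) (hcm₁1 : deriv cm₁ 0 = 1)
    (hc₀ : ContDiff ℝ 1 c₀) (hc₁ : ContDiff ℝ 1 c₁) (hb₁ : ContDiff ℝ 1 b₁)
    (hc₀0 : c₀ 0 = 1) (hc₀1 : deriv c₀ 0 = 0)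
    (hc₁0 : c₁ 0 = 0) (hc₁1 : deriv c₁ 0 = 1)
    (lam : ℝ) (hlam : lam ≠ 0) (hb₁0 : b₁ 0 = 0) (hb₁1 : deriv b₁ 0 = lam)
    (α₂ β₂ : ℝ → ℝ) (hα₂ : ContDiff ℝ 1 α₂) (hβ₂ : ContDiff ℝ 1 β₂)
    (tv dv : ℝ → ℝ × ℝ) (htv : Differentiable ℝ tv) (hdv : Differentiable ℝ dv)
    (φ₀ : ℝ) (g : ℝ × ℝ) (H : Matrix (Fin 2) (Fin 2) ℝ)
    (d : ℝ × ℝ × ℝ × ℝ × ℝ)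
    (hd : d = (φ₀, dot2 g (tv 0), qf H (tv 0) (tv 0) + dot2 g (deriv tv 0),
      (1 / lam) * dot2 g (dv 0),
      (1 / lam) * (qf H (tv 0) (dv 0) + dot2 g (deriv dv 0)))) :
    fEdgeSwap cp₀ cp₁ cp₂ cm₀ cm₁ c₀ c₁ b₁ α₂ β₂ d (0, 0) = φ₀ ∧
    pd1 (fEdgeSwap cp₀ cp₁ cp₂ cm₀ cm₁ c₀ c₁ b₁ α₂ β₂ d) (0, 0) = dot2 g (tv 0) ∧
    pd1 (pd1 (fEdgeSwap cp₀ cp₁ cp₂ cm₀ cm₁ c₀ c₁ b₁ α₂ β₂ d)) (0, 0)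
      = qf H (tv 0) (tv 0) + dot2 g (deriv tv 0) ∧
    pd2 (fEdgeSwap cp₀ cp₁ cp₂ cm₀ cm₁ c₀ c₁ b₁ α₂ β₂ d) (0, 0)
      = dot2 g (-(α₂ 0) • dv 0 - β₂ 0 • tv 0) ∧
    pd1 (pd2 (fEdgeSwap cp₀ cp₁ cp₂ cm₀ cm₁ c₀ c₁ b₁ α₂ β₂ d)) (0, 0)
      = qf H (tv 0) (-(α₂ 0) • dv 0 - β₂ 0 • tv 0)
        + dot2 g (-(deriv (fun ξ => α₂ ξ • dv ξ) 0)
          - deriv (fun ξ => β₂ ξ • tv ξ) 0) := by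
  subst hd
  have hα₂' := hα₂.differentiable one_ne_zero 0
  have hβ₂' := hβ₂.differentiable one_ne_zero 0
  obtain ⟨h0, h1, h2, h3, h4⟩ := fEdgeSwap_vertex_data (hcp₀.differentiable two_ne_zero)
    (hcp₁.differentiable two_ne_zero) (hcp₂.differentiable two_ne_zero)
    (hcp₀.differentiable_deriv_two 0) (hcp₁.differentiable_deriv_two 0)
    (hcp₂.differentiable_deriv_two 0) hcp₀0 hcp₀1 hcp₀2 hcp₁0 hcp₁1 hcp₁2 hcp₂0 hcp₂1 hcp₂2
    (hcm₀.differentiable one_ne_zero 0) (hcm₁.differentiable one_ne_zero 0)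
    hcm₀0 hcm₀1 hcm₁0 hcm₁1 (hc₀.differentiable one_ne_zero 0)
    (hc₁.differentiable one_ne_zero 0) (hb₁.differentiable one_ne_zero 0)
    hc₀0 hc₀1 hc₁0 hc₁1 hb₁0 hb₁1 hα₂' hβ₂' _ _ _ _ _
  have hαdv : deriv (fun ξ => α₂ ξ • dv ξ) 0 = α₂ 0 • deriv dv 0 + deriv α₂ 0 • dv 0 :=
    (hα₂'.hasDerivAt.smul (hdv 0).hasDerivAt).deriv
  have hβtv : deriv (fun ξ => β₂ ξ • tv ξ) 0 = β₂ 0 • deriv tv 0 + deriv β₂ 0 • tv 0 :=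
    (hβ₂'.hasDerivAt.smul (htv 0).hasDerivAt).deriv
  refine ⟨h0, h1, h2, ?_, ?_⟩
  · rw [h3]
    simp only [dot2, Prod.fst_sub, Prod.snd_sub, Prod.smul_fst, Prod.smul_snd, smul_eq_mul]
    field_simp
    ring
  · rw [h4, hαdv, hβtv]
    simp only [dot2, qf, Prod.fst_sub, Prod.snd_sub, Prod.fst_add, Prod.snd_add,
      Prod.fst_neg, Prod.snd_neg, Prod.smul_fst, Prod.smul_snd, smul_eq_mul]
    field_simp
    ring

/-- In the edge-form setting, the vertex-edge function on the second adjacent patch,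
built from the coefficients `d` obtained by interpolation on the first patch,
automatically attains the chain-rule Hermite data of `φ ∘ F` at `(0,0)` up to the
orders `(m₁ ≤ 2, m₂ ≤ 1, m₁+m₂ ≤ 2)`. -/
theorem stmt14 (cp₀ cp₁ cp₂ cm₀ cm₁ c₀ c₁ b₁ α β : ℝ → ℝ)
    (hcp₀ : ContDiff ℝ 2 cp₀) (hcp₁ : ContDiff ℝ 2 cp₁) (hcp₂ : ContDiff ℝ 2 cp₂)
    (hcp₀0 : cp₀ 0 = 1) (hcp₀1 : deriv cp₀ 0 = 0) (hcp₀2 : deriv (deriv cp₀) 0 = 0)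
    (hcp₁0 : cp₁ 0 = 0) (hcp₁1 : deriv cp₁ 0 = 1) (hcp₁2 : deriv (deriv cp₁) 0 = 0)
    (hcp₂0 : cp₂ 0 = 0) (hcp₂1 : deriv cp₂ 0 = 0) (hcp₂2 : deriv (deriv cp₂) 0 = 1)
    (hcm₀ : ContDiff ℝ 1 cm₀) (hcm₁ : ContDiff ℝ 1 cm₁)
    (hcm₀0 : cm₀ 0 = 1) (hcm₀1 : deriv cm₀ 0 = 0)
    (hcm₁0 : cm₁ 0 = 0) (hcm₁1 : deriv cm₁ 0 = 1)
    (hc₀ : ContDiff ℝ 1 c₀) (hc₁ : ContDiff ℝ 1 c₁) (hb₁ : ContDiff ℝ 1 b₁)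
    (hc₀0 : c₀ 0 = 1) (hc₀1 : deriv c₀ 0 = 0)
    (hc₁0 : c₁ 0 = 0) (hc₁1 : deriv c₁ 0 = 1)
    (lam : ℝ) (hlam : lam ≠ 0) (hb₁0 : b₁ 0 = 0) (hb₁1 : deriv b₁ 0 = lam)
    (hα : ContDiff ℝ 1 α) (hβ : ContDiff ℝ 1 β) (hα0 : α 0 ≠ 0)
    (α₂ β₂ : ℝ → ℝ) (hα₂ : ContDiff ℝ 1 α₂) (hβ₂ : ContDiff ℝ 1 β₂)
    (tv dv : ℝ → ℝ × ℝ) (htv : Differentiable ℝ tv) (hdv : Differentiable ℝ dv)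
    (φ₀ : ℝ) (g : ℝ × ℝ) (H : Matrix (Fin 2) (Fin 2) ℝ) (hH : H.IsSymm)
    (d : ℝ × ℝ × ℝ × ℝ × ℝ)
    (hd : d = (φ₀, dot2 g (tv 0), qf H (tv 0) (tv 0) + dot2 g (deriv tv 0),
      (1 / lam) * dot2 g (dv 0),
      (1 / lam) * (qf H (tv 0) (dv 0) + dot2 g (deriv dv 0)))) :
    fEdgeSwap cp₀ cp₁ cp₂ cm₀ cm₁ c₀ c₁ b₁ α₂ β₂ d (0, 0) = φ₀ ∧
    pd1 (fEdgeSwap cp₀ cp₁ cp₂ cm₀ cm₁ c₀ c₁ b₁ α₂ β₂ d) (0, 0) = dot2 g (tv 0) ∧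
    pd1 (pd1 (fEdgeSwap cp₀ cp₁ cp₂ cm₀ cm₁ c₀ c₁ b₁ α₂ β₂ d)) (0, 0)
      = qf H (tv 0) (tv 0) + dot2 g (deriv tv 0) ∧
    pd2 (fEdgeSwap cp₀ cp₁ cp₂ cm₀ cm₁ c₀ c₁ b₁ α₂ β₂ d) (0, 0)
      = dot2 g (-(α₂ 0) • dv 0 - β₂ 0 • tv 0) ∧
    pd1 (pd2 (fEdgeSwap cp₀ cp₁ cp₂ cm₀ cm₁ c₀ c₁ b₁ α₂ β₂ d)) (0, 0)
      = qf H (tv 0) (-(α₂ 0) • dv 0 - β₂ 0 • tv 0)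
        + dot2 g (-(deriv (fun ξ => α₂ ξ • dv ξ) 0)
          - deriv (fun ξ => β₂ ξ • tv ξ) 0) :=
  stmt14_general cp₀ cp₁ cp₂ cm₀ cm₁ c₀ c₁ b₁ hcp₀ hcp₁ hcp₂ hcp₀0 hcp₀1 hcp₀2 hcp₁0 hcp₁1 hcp₁2
    hcp₂0 hcp₂1 hcp₂2 hcm₀ hcm₁ hcm₀0 hcm₀1 hcm₁0 hcm₁1 hc₀ hc₁ hb₁ hc₀0 hc₀1 hc₁0 hc₁1 lam hlam
    hb₁0 hb₁1 α₂ β₂ hα₂ hβ₂ tv dv htv hdv φ₀ g H d hd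
end

section
/- Let b₀, b₁ : [0,1] → ℝ be C¹ with b₀(0)b₁′(0) − b₁(0)b₀′(0) ≠ 0, and let c₀, c₁ be (fixed) linear combinations of b₀ and b₁. Let c₀⁺, c₁⁺, c₂⁺ : [0,1] → ℝ be C², c₀⁻, c₁⁻ : [0,1] → ℝ be C¹, and α, β : [0,1] → ℝ be C¹. Let u(ξ₁,ξ₂) = Σ_{j=0}^{2} d₀ⱼ (c_j⁺(ξ₂)c₀(ξ₁) − β(ξ₂)(c_j⁺)′(ξ₂)c₁(ξ₁)) + Σ_{j=0}^{1} d₁ⱼ α(ξ₂)c_j⁻(ξ₂)b₁(ξ₁) for some coefficients d ∈ ℝ⁵, and let v(ξ₁,ξ₂) = Σ_{j₁,j₂ ∈ {0,1}} e_{j₁,j₂} b_{j₁}(ξ₁)b_{j₂}(ξ₂) for some coefficients e ∈ ℝ⁴. If u(0,0) = v(0,0), ∂₁u(0,0) = ∂₁v(0,0), ∂₂u(0,0) = ∂₂v(0,0) and ∂₁∂₂u(0,0) = ∂₁∂₂v(0,0), then u(ξ₁,0) = v(ξ₁,0) and ∂₂u(ξ₁,0) = ∂₂v(ξ₁,0)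 for all ξ₁ ∈ [0,1]. -/
/-!
Both `u` and `v` are sums of products `A(ξ₂) g(ξ₁)` with `A` differentiable at `0` and
`g ∈ span {b₀, b₁}`, so the traces `u(·,0)`, `v(·,0)`, `∂₂u(·,0)`, `∂₂v(·,0)` all lie in
`span {b₀, b₁}`. Since the Wronskian of `b₀, b₁` at `0` does not vanish, an element of this
span is determined by its value and derivative at `0`, and the four vertex conditions say
precisely that the two pairs of traces agree in value and derivative at `0`.
-/

open Submodule

section SpanPair

variable {b₀ b₁ : ℝ → ℝ} {x : ℝ}

theorem hasDerivAt_smul_add_smul (hb₀ : DifferentiableAt ℝ b₀ x)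
    (hb₁ : DifferentiableAt ℝ b₁ x) (a b : ℝ) :
    HasDerivAt (a • b₀ + b • b₁) (a * deriv b₀ x + b * deriv b₁ x) x :=
  (hb₀.hasDerivAt.const_smul a).add (hb₁.hasDerivAt.const_smul b)

theorem eq_of_mem_span_pair (hb₀ : DifferentiableAt ℝ b₀ x) (hb₁ : DifferentiableAt ℝ b₁ x)
    (hW : b₀ x * deriv b₁ x - b₁ x * deriv b₀ x ≠ 0) {g h : ℝ → ℝ}
    (hg : g ∈ span ℝ {b₀, b₁}) (hh : h ∈ span ℝ {b₀, b₁})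
    (h0 : g x = h x) (h1 : deriv g x = deriv h x) : g = h := by
  obtain ⟨a, b, rfl⟩ := mem_span_pair.1 hg
  obtain ⟨a', b', rfl⟩ := mem_span_pair.1 hh
  simp only [Pi.add_apply, Pi.smul_apply, smul_eq_mul] at h0
  rw [(hasDerivAt_smul_add_smul hb₀ hb₁ a b).deriv,
    (hasDerivAt_smul_add_smul hb₀ hb₁ a' b').deriv] at h1
  have ha : (a - a') * (b₀ x * deriv b₁ x - b₁ x * deriv b₀ x) = 0 := by
    linear_combination deriv b₁ x * h0 - b₁ x * h1
  have hb : (b - b') * (b₀ x * deriv b₁ x - b₁ x * deriv b₀ x) = 0 := by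
    linear_combination b₀ x * h1 - deriv b₀ x * h0
  rw [sub_eq_zero.1 ((mul_eq_zero.1 ha).resolve_right hW),
    sub_eq_zero.1 ((mul_eq_zero.1 hb).resolve_right hW)]

end SpanPair

section TensorSpan

variable {V : Submodule ℝ (ℝ → ℝ)} {t₀ : ℝ}

def tensorSpan (V : Submodule ℝ (ℝ → ℝ)) (t₀ : ℝ) : Submodule ℝ (ℝ × ℝ → ℝ) :=
  span ℝ {f | ∃ A : ℝ → ℝ, DifferentiableAt ℝ A t₀ ∧ ∃ g ∈ V, f = fun x => A x.2 * g x.1}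

theorem mul_mem_tensorSpan {A g : ℝ → ℝ} (hA : DifferentiableAt ℝ A t₀) (hg : g ∈ V) :
    (fun x : ℝ × ℝ => A x.2 * g x.1) ∈ tensorSpan V t₀ :=
  subset_span ⟨A, hA, g, hg, rfl⟩

theorem traces_mem_of_mem_tensorSpan {f : ℝ × ℝ → ℝ} (hf : f ∈ tensorSpan V t₀) :
    (∀ ξ, DifferentiableAt ℝ (fun t => f (ξ, t)) t₀) ∧
      (fun ξ => f (ξ, t₀)) ∈ V ∧ (fun ξ => pd2 f (ξ, t₀)) ∈ V := by
  induction hf using span_induction with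
  | mem f hf =>
    obtain ⟨A, hA, g, hg, rfl⟩ := hf
    refine ⟨fun ξ => hA.mul_const (g ξ), V.smul_mem (A t₀) hg, ?_⟩
    have hpd2 : (fun ξ => pd2 (fun x : ℝ × ℝ => A x.2 * g x.1) (ξ, t₀)) = deriv A t₀ • g :=
      funext fun ξ => deriv_mul_const hA (g ξ)
    exact hpd2 ▸ V.smul_mem (deriv A t₀) hg
  | zero =>
    refine ⟨fun _ => differentiableAt_const 0, V.zero_mem, ?_⟩
    simp only [pd2, Pi.zero_apply, deriv_const]
    exact V.zero_mem
  | add f g _ _ hf hg =>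
    refine ⟨fun ξ => (hf.1 ξ).add (hg.1 ξ), V.add_mem hf.2.1 hg.2.1, ?_⟩
    have hpd2 : (fun ξ => pd2 (f + g) (ξ, t₀))
        = (fun ξ => pd2 f (ξ, t₀)) + fun ξ => pd2 g (ξ, t₀) :=
      funext fun ξ => deriv_add (hf.1 ξ) (hg.1 ξ)
    exact hpd2 ▸ V.add_mem hf.2.2 hg.2.2
  | smul c f _ hf =>
    refine ⟨fun ξ => (hf.1 ξ).const_smul c, V.smul_mem c hf.2.1, ?_⟩
    have hpd2 : (fun ξ => pd2 (c • f) (ξ, t₀)) = c • fun ξ => pd2 f (ξ, t₀) :=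
      funext fun ξ => deriv_const_smul c (hf.1 ξ)
    exact hpd2 ▸ V.smul_mem c hf.2.2

theorem fEdge_mem_tensorSpan {cp₀ cp₁ cp₂ cm₀ cm₁ c₀ c₁ b₁ α β : ℝ → ℝ}
    (hcp : ∀ cp ∈ [cp₀, cp₁, cp₂], DifferentiableAt ℝ cp t₀ ∧ DifferentiableAt ℝ (deriv cp) t₀)
    (hcm₀ : DifferentiableAt ℝ cm₀ t₀) (hcm₁ : DifferentiableAt ℝ cm₁ t₀)
    (hα : DifferentiableAt ℝ α t₀) (hβ : DifferentiableAt ℝ β t₀)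
    (hc₀ : c₀ ∈ V) (hc₁ : c₁ ∈ V) (hb₁ : b₁ ∈ V) (d : ℝ × ℝ × ℝ × ℝ × ℝ) :
    fEdge cp₀ cp₁ cp₂ cm₀ cm₁ c₀ c₁ b₁ α β d ∈ tensorSpan V t₀ := by
  have hplus : ∀ cp ∈ [cp₀, cp₁, cp₂], (fun x : ℝ × ℝ =>
      cp x.2 * c₀ x.1 - β x.2 * deriv cp x.2 * c₁ x.1) ∈ tensorSpan V t₀ := fun cp h =>
    sub_mem (mul_mem_tensorSpan (hcp cp h).1 hc₀)
      (mul_mem_tensorSpan (hβ.mul (hcp cp h).2) hc₁)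
  have hminus : ∀ cm, DifferentiableAt ℝ cm t₀ →
      (fun x : ℝ × ℝ => α x.2 * cm x.2 * b₁ x.1) ∈ tensorSpan V t₀ := fun cm h =>
    mul_mem_tensorSpan (hα.mul h) hb₁
  exact add_mem (add_mem (add_mem (add_mem
    (smul_mem _ d.1 (hplus cp₀ (by simp))) (smul_mem _ d.2.1 (hplus cp₁ (by simp))))
    (smul_mem _ d.2.2.1 (hplus cp₂ (by simp))))
    (smul_mem _ d.2.2.2.1 (hminus cm₀ hcm₀))) (smul_mem _ d.2.2.2.2 (hminus cm₁ hcm₁))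

theorem tensorProductPair_mem_tensorSpan {b₀ b₁ : ℝ → ℝ} (hb₀ : DifferentiableAt ℝ b₀ t₀)
    (hb₁ : DifferentiableAt ℝ b₁ t₀) (e : ℝ × ℝ × ℝ × ℝ) :
    (fun x : ℝ × ℝ => e.1 * b₀ x.1 * b₀ x.2 + e.2.1 * b₁ x.1 * b₀ x.2
      + e.2.2.1 * b₀ x.1 * b₁ x.2 + e.2.2.2 * b₁ x.1 * b₁ x.2)
      ∈ tensorSpan (span ℝ {b₀, b₁}) t₀ := by
  have hb₀V : b₀ ∈ span ℝ {b₀, b₁} := subset_span (by simp)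
  have hb₁V : b₁ ∈ span ℝ {b₀, b₁} := subset_span (by simp)
  have hsum : (fun x : ℝ × ℝ => e.1 * b₀ x.1 * b₀ x.2 + e.2.1 * b₁ x.1 * b₀ x.2
      + e.2.2.1 * b₀ x.1 * b₁ x.2 + e.2.2.2 * b₁ x.1 * b₁ x.2)
      = e.1 • (fun x : ℝ × ℝ => b₀ x.2 * b₀ x.1) + e.2.1 • (fun x => b₀ x.2 * b₁ x.1)
        + e.2.2.1 • (fun x => b₁ x.2 * b₀ x.1) + e.2.2.2 • (fun x => b₁ x.2 * b₁ x.1) := by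
    funext x
    simp only [Pi.add_apply, Pi.smul_apply, smul_eq_mul]
    ring
  rw [hsum]
  exact add_mem (add_mem (add_mem
    (smul_mem _ _ (mul_mem_tensorSpan hb₀ hb₀V)) (smul_mem _ _ (mul_mem_tensorSpan hb₀ hb₁V)))
    (smul_mem _ _ (mul_mem_tensorSpan hb₁ hb₀V))) (smul_mem _ _ (mul_mem_tensorSpan hb₁ hb₁V))

end TensorSpan

/-- If a vertex-edge function `u` and a vertex-patch tensor-product function `v` match
in value, first derivatives and mixed second derivative at the vertex `(0,0)`, then
they coincide, together with their transversal derivatives, along the whole edge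
`{ξ₂ = 0}`. -/
theorem stmt15 (b₀ b₁ : ℝ → ℝ) (hb₀ : ContDiff ℝ 1 b₀) (hb₁ : ContDiff ℝ 1 b₁)
    (hW : b₀ 0 * deriv b₁ 0 - b₁ 0 * deriv b₀ 0 ≠ 0)
    (p₀ q₀ p₁ q₁ : ℝ) (c₀ c₁ : ℝ → ℝ)
    (hc₀ : c₀ = fun ξ => p₀ * b₀ ξ + q₀ * b₁ ξ)
    (hc₁ : c₁ = fun ξ => p₁ * b₀ ξ + q₁ * b₁ ξ)
    (cp₀ cp₁ cp₂ : ℝ → ℝ)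
    (hcp₀ : ContDiff ℝ 2 cp₀) (hcp₁ : ContDiff ℝ 2 cp₁) (hcp₂ : ContDiff ℝ 2 cp₂)
    (cm₀ cm₁ : ℝ → ℝ) (hcm₀ : ContDiff ℝ 1 cm₀) (hcm₁ : ContDiff ℝ 1 cm₁)
    (α β : ℝ → ℝ) (hα : ContDiff ℝ 1 α) (hβ : ContDiff ℝ 1 β)
    (d : ℝ × ℝ × ℝ × ℝ × ℝ) (e : ℝ × ℝ × ℝ × ℝ)
    (u v : ℝ × ℝ → ℝ)
    (hu : u = fEdge cp₀ cp₁ cp₂ cm₀ cm₁ c₀ c₁ b₁ α β d)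
    (hv : v = fun ξ => e.1 * b₀ ξ.1 * b₀ ξ.2 + e.2.1 * b₁ ξ.1 * b₀ ξ.2
      + e.2.2.1 * b₀ ξ.1 * b₁ ξ.2 + e.2.2.2 * b₁ ξ.1 * b₁ ξ.2)
    (h00 : u (0, 0) = v (0, 0)) (h10 : pd1 u (0, 0) = pd1 v (0, 0))
    (h01 : pd2 u (0, 0) = pd2 v (0, 0))
    (h11 : pd1 (pd2 u) (0, 0) = pd1 (pd2 v) (0, 0)) :
    ∀ ξ₁ ∈ Set.Icc (0:ℝ) 1, u (ξ₁, 0) = v (ξ₁, 0) ∧ pd2 u (ξ₁, 0) = pd2 v (ξ₁, 0) := by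
  have hdiff {f : ℝ → ℝ} {n : WithTop ℕ∞} (hf : ContDiff ℝ n f) (hn : n ≠ 0) :
      DifferentiableAt ℝ f 0 :=
    hf.differentiable hn 0
  have hcp : ∀ cp ∈ [cp₀, cp₁, cp₂], DifferentiableAt ℝ cp 0 ∧ DifferentiableAt ℝ (deriv cp) 0 := by
    have h2 {cp : ℝ → ℝ} (h : ContDiff ℝ 2 cp) :=
      And.intro (hdiff h two_ne_zero) (h.differentiable_deriv_two 0)
    simpa using ⟨h2 hcp₀, h2 hcp₁, h2 hcp₂⟩
  have hb₀' := hdiff hb₀ one_ne_zero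
  have hb₁' := hdiff hb₁ one_ne_zero
  have hu_mem : u ∈ tensorSpan (span ℝ {b₀, b₁}) 0 :=
    hu ▸ fEdge_mem_tensorSpan hcp (hdiff hcm₀ one_ne_zero) (hdiff hcm₁ one_ne_zero)
      (hdiff hα one_ne_zero) (hdiff hβ one_ne_zero) (hc₀ ▸ mem_span_pair.2 ⟨p₀, q₀, rfl⟩)
      (hc₁ ▸ mem_span_pair.2 ⟨p₁, q₁, rfl⟩) (subset_span (by simp)) d
  have hv_mem : v ∈ tensorSpan (span ℝ {b₀, b₁}) 0 :=
    hv ▸ tensorProductPair_mem_tensorSpan hb₀' hb₁' e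
  obtain ⟨-, hu0, hu2⟩ := traces_mem_of_mem_tensorSpan hu_mem
  obtain ⟨-, hv0, hv2⟩ := traces_mem_of_mem_tensorSpan hv_mem
  have htrace := eq_of_mem_span_pair hb₀' hb₁' hW hu0 hv0 h00 h10
  have hpd2 := eq_of_mem_span_pair hb₀' hb₁' hW hu2 hv2 h01 h11
  exact fun ξ₁ _ => ⟨congrFun htrace ξ₁, congrFun hpd2 ξ₁⟩
end
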